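/- arXiv:1412.5193 — 5 statements merged into one kernel-verified Lean document; each statement's English description precedes it below -/
import Mathlib

section
/- Let A be a skew PBW extension of a ring R with respect to x₁,…,xₙ. Then for every 1 ≤ i ≤ n there exist an injective ring endomorphism σᵢ : R → R and a σᵢ-derivation δᵢ : R → R (i.e., δᵢ is additive and δᵢ(rs) = σᵢ(r)δᵢ(s) + δᵢ(r)s for all r,s ∈ R) such that xᵢ r = σᵢ(r) xᵢ + δᵢ(r) for every r ∈ R. -/
/-- The standard monomial `x₁^{α₁} ⋯ xₙ^{αₙ}`, the factors taken in increasing index order. -/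
def xmon {A : Type} [Ring A] {n : ℕ} (x : Fin n → A) (α : Fin n → ℕ) : A :=
  ((List.finRange n).map (fun i => x i ^ α i)).prod

/-- `A` is a skew PBW extension of the subring `S ⊆ A` with respect to `x₁,…,xₙ`. -/
structure IsSkewPBWExt {A : Type} [Ring A] {n : ℕ} (S : Subring A) (x : Fin n → A) : Prop where
  /-- The standard monomials are left linearly independent over `S`. -/
  linearIndependent : LinearIndependent S (xmon x)
  /-- The standard monomials span `A` as a left `S`-module. -/
  spans : Submodule.span S (Set.range (xmon x)) = ⊤
  /-- For every `i` and `0 ≠ r ∈ S` there is `0 ≠ c ∈ S` with `xᵢ r − c xᵢ ∈ S`. -/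
  comm_coeff : ∀ (i : Fin n) (r : A), r ∈ S → r ≠ 0 →
    ∃ c ∈ S, c ≠ 0 ∧ x i * r - c * x i ∈ S
  /-- For all `i, j` there is `0 ≠ c ∈ S` with `x_j xᵢ − c xᵢ x_j ∈ S + Sx₁ + ⋯ + Sxₙ`. -/
  comm_vars : ∀ i j : Fin n, ∃ c ∈ S, c ≠ 0 ∧
    x j * x i - c * (x i * x j) ∈ Submodule.span S (insert (1 : A) (Set.range x))

/-! Since `1` and `xᵢ` are left independent over `R`, the coefficients `σ(r), δ(r)` in
`xᵢ r = σ(r) xᵢ + δ(r)` are unique. Expanding `xᵢ (r + s)` and `xᵢ (r s)` in two ways then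
shows that `σ` is a ring endomorphism and `δ` a `σ`-derivation, and condition (iii) says
`σ(r) = c_{i,r} ≠ 0` for `r ≠ 0`. -/

theorem xmon_zero {A : Type} [Ring A] {n : ℕ} (x : Fin n → A) : xmon x 0 = 1 :=
  List.prod_eq_one <| by simp

theorem xmon_single {A : Type} [Ring A] {n : ℕ} (x : Fin n → A) (i : Fin n) :
    xmon x (Pi.single i 1) = x i := by
  classical
  rw [xmon, List.prod_map_eq_pow_single i _ fun j hj _ => by simp [Pi.single_eq_of_ne hj]]
  simp [List.count_finRange]

section SkewCommutation

variable {A : Type*} [Ring A] {S : Subring A} {y : A}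

theorem LinearIndependent.eq_of_mul_add_eq_mul_add (hy : LinearIndependent S ![y, 1])
    {c d c' d' : S} (h : (c : A) * y + d = c' * y + d') : c = c' ∧ d = d' :=
  hy.eq_of_pair (by simpa [Subring.smul_def] using h)

def IsSkewCommutation (S : Subring A) (y : A) (σ δ : S → S) : Prop :=
  ∀ r : S, y * (r : A) = σ r * y + δ r

namespace IsSkewCommutation

variable {σ δ : S → S}

theorem map_one (hy : LinearIndependent S ![y, 1]) (h : IsSkewCommutation S y σ δ) :
    σ 1 = 1 ∧ δ 1 = 0 :=
  hy.eq_of_mul_add_eq_mul_add <| (h 1).symm.trans <| by simp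

theorem map_add (hy : LinearIndependent S ![y, 1]) (h : IsSkewCommutation S y σ δ) (r s : S) :
    σ (r + s) = σ r + σ s ∧ δ (r + s) = δ r + δ s :=
  hy.eq_of_mul_add_eq_mul_add <| (h (r + s)).symm.trans <| by
    push_cast
    rw [mul_add, h r, h s, add_mul]
    abel

theorem map_mul (hy : LinearIndependent S ![y, 1]) (h : IsSkewCommutation S y σ δ) (r s : S) :
    σ (r * s) = σ r * σ s ∧ δ (r * s) = σ r * δ s + δ r * s :=
  hy.eq_of_mul_add_eq_mul_add <| (h (r * s)).symm.trans <| by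
    push_cast
    calc y * (r * s) = (σ r * y + δ r) * s := by rw [← mul_assoc, h r]
      _ = σ r * (σ s * y + δ s) + δ r * s := by rw [add_mul, mul_assoc, h s]
      _ = σ r * σ s * y + (σ r * δ s + δ r * s) := by noncomm_ring

def ringHom (hy : LinearIndependent S ![y, 1]) (h : IsSkewCommutation S y σ δ) : S →+* S :=
  RingHom.mk' ⟨⟨σ, (h.map_one hy).1⟩, fun r s => (h.map_mul hy r s).1⟩ fun r s =>
    (h.map_add hy r s).1

theorem ringHom_injective (hy : LinearIndependent S ![y, 1]) (h : IsSkewCommutation S y σ δ)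
    (hne : ∀ r : S, r ≠ 0 → ∃ c d : S, c ≠ 0 ∧ y * r = c * y + d) :
    Function.Injective (h.ringHom hy) := by
  refine (injective_iff_map_eq_zero _).2 fun r hr => ?_
  by_contra hr0
  obtain ⟨c, d, hc, hcd⟩ := hne r hr0
  have : σ r = c := (hy.eq_of_mul_add_eq_mul_add ((h r).symm.trans hcd)).1
  exact hc (this ▸ hr)

end IsSkewCommutation

theorem exists_injective_skewDerivation (hy : LinearIndependent S ![y, 1])
    (hne : ∀ r : S, r ≠ 0 → ∃ c d : S, c ≠ 0 ∧ y * r = c * y + d) :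
    ∃ σ : S →+* S, Function.Injective σ ∧ ∃ δ : S → S,
      (∀ r s : S, δ (r + s) = δ r + δ s) ∧
      (∀ r s : S, δ (r * s) = σ r * δ s + δ r * s) ∧
      (∀ r : S, y * (r : A) = (σ r : A) * y + (δ r : A)) := by
  have hex (r : S) : ∃ c d : S, y * r = c * y + d := by
    rcases eq_or_ne r 0 with rfl | hr
    · exact ⟨0, 0, by simp⟩
    · obtain ⟨c, d, -, hcd⟩ := hne r hr
      exact ⟨c, d, hcd⟩
  choose σ δ h using hex
  have h : IsSkewCommutation S y σ δ := h
  exact ⟨h.ringHom hy, h.ringHom_injective hy hne, δ, fun r s => (h.map_add hy r s).2,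
    fun r s => (h.map_mul hy r s).2, h⟩

end SkewCommutation

namespace IsSkewPBWExt

variable {A : Type} [Ring A] {n : ℕ} {S : Subring A} {x : Fin n → A}

theorem linearIndependent_pair (hA : IsSkewPBWExt S x) (i : Fin n) :
    LinearIndependent S ![x i, 1] := by
  have hinj : Function.Injective ![(Pi.single i 1 : Fin n → ℕ), 0] :=
    injective_pair_iff_ne.2 fun h => by simpa using congrFun h i
  convert hA.linearIndependent.comp _ hinj
  ext j
  fin_cases j <;> simp [xmon_single, xmon_zero]

theorem exists_mul_eq_mul_add (hA : IsSkewPBWExt S x) (i : Fin n) {r : S} (hr : r ≠ 0) :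
    ∃ c d : S, c ≠ 0 ∧ x i * r = c * x i + d := by
  obtain ⟨c, hc, hc0, hd⟩ := hA.comm_coeff i r r.2 (by simpa using hr)
  exact ⟨⟨c, hc⟩, ⟨_, hd⟩, by simpa using hc0, by simp⟩

end IsSkewPBWExt

/-- For every `1 ≤ i ≤ n` there exist an injective ring endomorphism `σᵢ : R → R` and a
`σᵢ`-derivation `δᵢ : R → R` such that `xᵢ r = σᵢ(r) xᵢ + δᵢ(r)` for every `r ∈ R`. -/
theorem skewPBW_induced_endomorphisms {A : Type} [Ring A] {n : ℕ}
    (S : Subring A) (x : Fin n → A) (hA : IsSkewPBWExt S x) (i : Fin n) :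
    ∃ σ : S →+* S, Function.Injective σ ∧ ∃ δ : S → S,
      (∀ r s : S, δ (r + s) = δ r + δ s) ∧
      (∀ r s : S, δ (r * s) = σ r * δ s + δ r * s) ∧
      (∀ r : S, x i * (r : A) = (σ r : A) * x i + (δ r : A)) :=
  exists_injective_skewDerivation (hA.linearIndependent_pair i) fun _ => hA.exists_mul_eq_mul_add i
end

section
/- Let A be a skew PBW extension of a ring R with respect to x₁,…,xₙ. Then for every standard monomial x^α ∈ Mon(A) and every r ∈ R∖{0} there exist unique elements r_α ∈ R∖{0} and p_{α,r} ∈ A such that x^α r = r_α x^α + p_{α,r}, where p_{α,r} = 0 or deg(p_{α,r}) < |α| := α₁+⋯+αₙ; moreover r_α = σ^α(r) := σ₁^{α₁}(⋯σₙ^{αₙ}(r)⋯), where the σᵢ are the endomorphisms induced by A, and if r is left invertible in R then r_α is left invertible in R. -/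
/-- The `S`-span of the standard monomials of total degree `< N`.  An element `p ∈ A` satisfies
`p = 0` or `deg p < N` precisely when `p` lies in this submodule. -/
def lowMon {A : Type} [Ring A] {n : ℕ} (S : Subring A) (x : Fin n → A) (N : ℕ) :
    Submodule S A :=
  Submodule.span S (xmon x '' {α : Fin n → ℕ | (∑ i, α i) < N})

/-- `σ^α(r) := σ₁^{α₁}(σ₂^{α₂}(⋯ σₙ^{αₙ}(r) ⋯))`. -/
def sigmaPow {S : Type} {n : ℕ} (σ : Fin n → S → S) (α : Fin n → ℕ) : S → S :=
  (List.finRange n).foldr (fun i g => (σ i)^[α i] ∘ g) id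

/-!
Write `x^α` as the word `x_{i₁} ⋯ x_{iₖ}`, `k = |α|`, `i₁ ≤ ⋯ ≤ iₖ`. Everything rests on one fact:
left multiplication by a variable raises the filtration `lowMon` by at most one. For `x_i x^β`
this is proved by induction on `(|β|, i)` ordered lexicographically: the product is a standard
monomial unless the first variable `x_j` of `x^β` has `j < i`, and then
`x_i x_j = c x_j x_i + (terms of degree ≤ 1)` reduces it to smaller cases.

Given any maps `τ_i` with `x_i s - τ_i(s) x_i ∈ R` (the `c_{i,s}` of the definition, or the `σ_i`),
pushing `r` through the word letter by letter gives `x^α r = τ^α(r) x^α + (lower terms)`.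
Linear independence of the standard monomials makes this leading coefficient unique, and leading
coefficients are multiplicative, so a left inverse `u` of `r` gives the left inverse `u_α` of `r_α`.
-/

theorem List.prod_map_pow_add_single {M : Type*} [Monoid M] {n : ℕ} (x : Fin n → M)
    {β : Fin n → ℕ} {i : Fin n} {L : List (Fin n)} (hL : L.Pairwise (· < ·)) (hi : i ∈ L)
    (hβ : ∀ j ∈ L, j < i → β j = 0) :
    (L.map fun j => x j ^ (β + Pi.single i 1 : Fin n → ℕ) j).prod =
      x i * (L.map fun j => x j ^ β j).prod := by
  induction L with
  | nil => simp at hi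
  | cons a L ih =>
    rw [List.pairwise_cons] at hL
    simp only [List.map_cons, List.prod_cons]
    obtain rfl | hiL := List.mem_cons.mp hi
    · have hrest : ∀ j ∈ L, (β + Pi.single i 1 : Fin n → ℕ) j = β j := fun j hj => by
        simp [(hL.1 j hj).ne']
      rw [List.map_congr_left fun j hj => by rw [hrest j hj], Pi.add_apply, Pi.single_eq_same,
        pow_succ', mul_assoc]
    · have hai := hL.1 i hiL
      rw [Pi.add_apply, Pi.single_eq_of_ne hai.ne, hβ a List.mem_cons_self hai, add_zero, pow_zero,
        one_mul, one_mul, ih hL.2 hiL fun j hj => hβ j (List.mem_cons_of_mem a hj)]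

theorem Submodule.mul_mem_of_mem_span {R B : Type*} [Semiring R] [NonUnitalNonAssocSemiring B]
    [Module R B] [IsScalarTower R B B] {s : Set B} {m : B} {M : Submodule R B} (h : ∀ a ∈ s, a * m ∈ M)
    {a : B} (ha : a ∈ Submodule.span R s) : a * m ∈ M :=
  Submodule.span_le (p := M.comap (LinearMap.mulRight R m)) |>.mpr h ha

section

variable {A : Type} [Ring A] {n : ℕ} {S : Subring A} {x : Fin n → A}

theorem xmon_add_single {β : Fin n → ℕ} {i : Fin n} (hβ : ∀ j < i, β j = 0) :
    xmon x (β + Pi.single i 1 : Fin n → ℕ) = x i * xmon x β :=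
  List.prod_map_pow_add_single x (List.pairwise_lt_finRange n) (List.mem_finRange i)
    fun j _ => hβ j

theorem xmon_mem_lowMon {β : Fin n → ℕ} {N : ℕ} (h : ∑ i, β i < N) : xmon x β ∈ lowMon S x N :=
  Submodule.subset_span ⟨β, h, rfl⟩

theorem lowMon_mono : Monotone (lowMon S x) := fun _ _ h =>
  Submodule.span_mono (Set.image_mono fun _ hβ => lt_of_lt_of_le hβ h)

theorem eq_zero_of_mul_xmon_mem_lowMon (hli : LinearIndependent S (xmon x)) {α : Fin n → ℕ}
    {c : S} (h : (c : A) * xmon x α ∈ lowMon S x (∑ i, α i)) : c = 0 := by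
  refine hli.eq_zero_of_smul_mem_span α c (Submodule.span_mono (Set.image_mono ?_) h)
  rintro β (hβ : ∑ i, β i < ∑ i, α i)
  exact ⟨trivial, by rintro rfl; exact hβ.false⟩

theorem eq_of_sub_mul_xmon_mem_lowMon (hli : LinearIndependent S (xmon x)) {α : Fin n → ℕ}
    {a : A} {c c' : S} (h : a - c * xmon x α ∈ lowMon S x (∑ i, α i))
    (h' : a - c' * xmon x α ∈ lowMon S x (∑ i, α i)) : c = c' := by
  have : ((c' - c : S) : A) * xmon x α ∈ lowMon S x (∑ i, α i) := by
    convert Submodule.sub_mem _ h h' using 1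
    push_cast; noncomm_ring
  exact (sub_eq_zero.mp (eq_zero_of_mul_xmon_mem_lowMon hli this)).symm

def monWord (α : Fin n → ℕ) : List (Fin n) :=
  (List.finRange n).flatMap fun i => List.replicate (α i) i

theorem length_monWord (α : Fin n → ℕ) : (monWord α).length = ∑ i, α i := by
  simp [monWord, List.length_flatMap, Fin.sum_univ_def]

theorem xmon_eq_prod_monWord (α : Fin n → ℕ) : xmon x α = ((monWord α).map x).prod := by
  simp [monWord, xmon, List.flatMap_def, List.prod_flatten, Function.comp_def]

theorem sigmaPow_apply_eq_foldr_monWord {T : Type} (τ : Fin n → T → T) (α : Fin n → ℕ) (t : T) :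
    sigmaPow τ α t = (monWord α).foldr τ t := by
  simp only [sigmaPow, monWord, List.foldr_flatMap]
  induction List.finRange n with
  | nil => rfl
  | cons a L ih =>
    simp only [List.foldr_cons, Function.comp_apply, ih]
    generalize L.foldr _ t = u
    induction α a with
    | zero => rfl
    | succ k ihk => rw [Function.iterate_succ_apply', ihk]; rfl

theorem sigmaPow_ne_zero {T : Type} [Zero T] {n : ℕ} {τ : Fin n → T → T}
    (hτ : ∀ i t, t ≠ 0 → τ i t ≠ 0) (α : Fin n → ℕ) {t : T} (ht : t ≠ 0) : sigmaPow τ α t ≠ 0 := by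
  rw [sigmaPow_apply_eq_foldr_monWord]
  induction monWord α with
  | nil => exact ht
  | cons i w ih => exact hτ i _ ih

end

namespace IsSkewPBWExt

variable {A : Type} [Ring A] {n : ℕ} {S : Subring A} {x : Fin n → A}

theorem exists_skewCoeff (hA : IsSkewPBWExt S x) :
    ∃ τ : Fin n → S → S, (∀ i s, s ≠ 0 → τ i s ≠ 0) ∧
      ∀ i (s : S), x i * (s : A) - (τ i s : A) * x i ∈ S := by
  have : ∀ i (s : S), ∃ c : S, (s ≠ 0 → c ≠ 0) ∧ x i * (s : A) - (c : A) * x i ∈ S := by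
    intro i s
    by_cases hs : s = 0
    · exact ⟨0, fun h => (h hs).elim, by simp [hs]⟩
    · obtain ⟨c, hcS, hc, hmem⟩ := hA.comm_coeff i s s.2 (by simpa using hs)
      exact ⟨⟨c, hcS⟩, fun _ h => hc (congrArg Subtype.val h), hmem⟩
  choose τ hτ0 hτ using this
  exact ⟨τ, hτ0, hτ⟩

theorem xvar_mul_mem_lowMon_succ_of_forall_xmon (hA : IsSkewPBWExt S x) {j : Fin n} {N : ℕ}
    (h : ∀ γ : Fin n → ℕ, ∑ t, γ t < N → x j * xmon x γ ∈ lowMon S x (N + 1)) {p : A}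
    (hp : p ∈ lowMon S x N) : x j * p ∈ lowMon S x (N + 1) := by
  obtain ⟨τ, -, hτ⟩ := hA.exists_skewCoeff
  induction hp using Submodule.span_induction with
  | mem _ hγ => obtain ⟨γ, hγ, rfl⟩ := hγ; exact h γ hγ
  | zero => simp
  | add p q _ _ hp hq => rw [mul_add]; exact add_mem hp hq
  | smul s p hp hjp =>
    have hsplit : x j * (s • p) = τ j s • (x j * p) + (⟨_, hτ j s⟩ : S) • p := by
      simp only [Subring.smul_def, smul_eq_mul]; noncomm_ring
    rw [hsplit]
    exact add_mem (Submodule.smul_mem _ _ hjp)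
      (Submodule.smul_mem _ _ (lowMon_mono (Nat.le_succ N) hp))

theorem xvar_mul_xmon_mem_lowMon (hA : IsSkewPBWExt S x) (i : Fin n) (β : Fin n → ℕ) :
    x i * xmon x β ∈ lowMon S x (∑ t, β t + 2) := by
  suffices ∀ d i β, ∑ t, β t = d → x i * xmon x β ∈ lowMon S x (d + 2) from this _ i β rfl
  intro d
  induction d using Nat.strong_induction_on with | _ d ihd => ?_
  intro i
  induction i using WellFoundedLT.induction with | _ i ihi => ?_
  intro β hβd
  by_cases hβ : ∀ j < i, β j = 0
  · rw [← xmon_add_single hβ]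
    exact xmon_mem_lowMon (by simp [Finset.sum_add_distrib, hβd])
  push Not at hβ
  obtain ⟨j, ⟨hji, hβj⟩, hmin⟩ := WellFounded.has_min wellFounded_lt {j | j < i ∧ β j ≠ 0} hβ
  obtain ⟨β', rfl⟩ : ∃ β', β = β' + Pi.single j 1 :=
    ⟨β - Pi.single j 1, by ext k; by_cases hk : k = j <;> simp [hk]; omega⟩
  have hβ' : ∀ k < j, β' k = 0 := fun k hkj => by
    simpa [hkj.ne] using fun h => hmin k ⟨hkj.trans hji, h⟩ hkj
  have hd : ∑ t, β' t + 1 = d := by simpa [Finset.sum_add_distrib] using hβd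
  obtain ⟨c, hcS, -, hL⟩ := hA.comm_vars j i
  set L := x i * x j - c * (x j * x i)
  have hxij : x i * xmon x β' ∈ lowMon S x (d + 1) := hd ▸ ihd _ (by omega) i β' rfl
  have hxjxij : x j * (x i * xmon x β') ∈ lowMon S x (d + 2) := by
    refine hA.xvar_mul_mem_lowMon_succ_of_forall_xmon (fun γ hγ => ?_) hxij
    obtain hγ | hγ := Nat.lt_succ_iff_lt_or_eq.mp hγ
    · exact lowMon_mono (by omega) (ihd _ hγ j γ rfl)
    · exact ihi j hji γ hγ
  have hLx : L * xmon x β' ∈ lowMon S x (d + 2) := by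
    refine Submodule.mul_mem_of_mem_span (fun a ha => ?_) hL
    obtain rfl | ⟨k, rfl⟩ := ha
    · rw [one_mul]; exact xmon_mem_lowMon (by omega)
    · exact lowMon_mono (by omega) (ihd _ (by omega) k β' rfl)
  rw [xmon_add_single hβ', ← mul_assoc,
    show x i * x j = (⟨c, hcS⟩ : S) • (x j * x i) + L by simp [L, Subring.smul_def], add_mul,
    smul_mul_assoc, mul_assoc]
  exact add_mem (Submodule.smul_mem _ _ hxjxij) hLx

theorem xvar_mul_mem_lowMon_succ (hA : IsSkewPBWExt S x) (i : Fin n) {N : ℕ} {p : A}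
    (hp : p ∈ lowMon S x N) : x i * p ∈ lowMon S x (N + 1) :=
  hA.xvar_mul_mem_lowMon_succ_of_forall_xmon
    (fun γ hγ => lowMon_mono (by omega) (hA.xvar_mul_xmon_mem_lowMon i γ)) hp

theorem prod_map_mem_lowMon (hA : IsSkewPBWExt S x) (w : List (Fin n)) :
    (w.map x).prod ∈ lowMon S x (w.length + 1) := by
  induction w with
  | nil =>
    simpa [xmon] using xmon_mem_lowMon (S := S) (x := x) (β := 0) (N := 1) (by simp)
  | cons i w ih => simpa using hA.xvar_mul_mem_lowMon_succ i ih

theorem prod_map_mul_sub_foldr_mem_lowMon (hA : IsSkewPBWExt S x) {τ : Fin n → S → S}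
    (hτ : ∀ i (s : S), x i * (s : A) - (τ i s : A) * x i ∈ S) (w : List (Fin n)) (r : S) :
    (w.map x).prod * r - ((w.foldr τ r : S) : A) * (w.map x).prod ∈ lowMon S x w.length := by
  induction w with
  | nil => simp
  | cons i w ih =>
    set s := w.foldr τ r
    have hsplit : (x i * (w.map x).prod) * r - (τ i s : A) * (x i * (w.map x).prod) =
        (⟨_, hτ i s⟩ : S) • (w.map x).prod + x i * ((w.map x).prod * r - s * (w.map x).prod) := by
      simp only [Subring.smul_def, smul_eq_mul]; noncomm_ring
    simp only [List.map_cons, List.prod_cons, List.foldr_cons, List.length_cons]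
    rw [hsplit]
    exact add_mem (Submodule.smul_mem _ _ (hA.prod_map_mem_lowMon w))
      (hA.xvar_mul_mem_lowMon_succ i ih)

theorem xmon_mul_sub_sigmaPow_mem_lowMon (hA : IsSkewPBWExt S x) {τ : Fin n → S → S}
    (hτ : ∀ i (s : S), x i * (s : A) - (τ i s : A) * x i ∈ S) (α : Fin n → ℕ) (r : S) :
    xmon x α * r - ((sigmaPow τ α r : S) : A) * xmon x α ∈ lowMon S x (∑ i, α i) := by
  rw [xmon_eq_prod_monWord, sigmaPow_apply_eq_foldr_monWord, ← length_monWord]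
  exact hA.prod_map_mul_sub_foldr_mem_lowMon hτ _ r

theorem mul_mem_lowMon (hA : IsSkewPBWExt S x) {N : ℕ} {p : A} (hp : p ∈ lowMon S x N) (s : S) :
    p * s ∈ lowMon S x N := by
  obtain ⟨τ, -, hτ⟩ := hA.exists_skewCoeff
  refine Submodule.mul_mem_of_mem_span ?_ hp
  rintro _ ⟨γ, hγ : ∑ i, γ i < N, rfl⟩
  rw [← sub_add_cancel (xmon x γ * s) (sigmaPow τ γ s * xmon x γ)]
  exact add_mem (lowMon_mono hγ.le (hA.xmon_mul_sub_sigmaPow_mem_lowMon hτ γ s))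
    (Submodule.smul_mem _ _ (xmon_mem_lowMon hγ))

theorem xmon_mul_mul_sub_mem_lowMon (hA : IsSkewPBWExt S x) {α : Fin n → ℕ} {r s c d : S}
    (hr : xmon x α * r - (c : A) * xmon x α ∈ lowMon S x (∑ i, α i))
    (hs : xmon x α * s - (d : A) * xmon x α ∈ lowMon S x (∑ i, α i)) :
    xmon x α * ((r * s : S) : A) - ((c * d : S) : A) * xmon x α ∈ lowMon S x (∑ i, α i) := by
  have : xmon x α * ((r * s : S) : A) - ((c * d : S) : A) * xmon x α =
      (xmon x α * r - c * xmon x α) * s + c • (xmon x α * s - d * xmon x α) := by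
    simp only [Subring.smul_def, smul_eq_mul, Subring.coe_mul]; noncomm_ring
  rw [this]
  exact add_mem (hA.mul_mem_lowMon hr s) (Submodule.smul_mem _ _ hs)

end IsSkewPBWExt

/-- For every standard monomial `x^α` and every `0 ≠ r ∈ R` there exist unique `0 ≠ r_α ∈ R` and
`p_{α,r} ∈ A` with `x^α r = r_α x^α + p_{α,r}` and `p_{α,r} = 0` or `deg p_{α,r} < |α|`;
moreover `r_α = σ^α(r)` for the induced endomorphisms `σᵢ`, and if `r` is left invertible
then so is `r_α`. -/
theorem skewPBW_monomial_coeff {A : Type} [Ring A] {n : ℕ}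
    (S : Subring A) (x : Fin n → A) (hA : IsSkewPBWExt S x)
    (α : Fin n → ℕ) (r : S) (hr : r ≠ 0) :
    (∃! rp : S × A, rp.1 ≠ 0 ∧ rp.2 ∈ lowMon S x (∑ i, α i) ∧
        xmon x α * (r : A) = (rp.1 : A) * xmon x α + rp.2) ∧
    (∀ (σ : Fin n → S →+* S) (δ : Fin n → S → S),
      (∀ (i : Fin n) (s : S), x i * (s : A) = ((σ i) s : A) * x i + (δ i s : A)) →
      ∀ (c : S) (p : A), c ≠ 0 → p ∈ lowMon S x (∑ i, α i) →
        xmon x α * (r : A) = (c : A) * xmon x α + p →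
        c = sigmaPow (fun i => ⇑(σ i)) α r) ∧
    ((∃ u : S, u * r = 1) →
      ∀ (c : S) (p : A), c ≠ 0 → p ∈ lowMon S x (∑ i, α i) →
        xmon x α * (r : A) = (c : A) * xmon x α + p →
        ∃ u : S, u * c = 1) := by
  have hsub {c : S} {p : A} (hp : p ∈ lowMon S x (∑ i, α i))
      (h : xmon x α * r = c * xmon x α + p) :
      xmon x α * r - c * xmon x α ∈ lowMon S x (∑ i, α i) := by
    rwa [h, add_sub_cancel_left]
  obtain ⟨τ, hτ0, hτ⟩ := hA.exists_skewCoeff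
  have hlead := hA.xmon_mul_sub_sigmaPow_mem_lowMon hτ α
  refine ⟨⟨(sigmaPow τ α r, xmon x α * r - sigmaPow τ α r * xmon x α),
    ⟨sigmaPow_ne_zero hτ0 α hr, hlead r, (add_sub_cancel _ _).symm⟩, ?_⟩, ?_, ?_⟩
  · rintro ⟨c, p⟩ ⟨-, hp, h⟩
    obtain rfl := eq_of_sub_mul_xmon_mem_lowMon hA.linearIndependent (hsub hp h) (hlead r)
    simp [h]
  · intro σ δ hσ c p _ hp h
    refine eq_of_sub_mul_xmon_mem_lowMon hA.linearIndependent (hsub hp h)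
      (hA.xmon_mul_sub_sigmaPow_mem_lowMon (fun i s => ?_) α r)
    simp [hσ]
  · rintro ⟨u, hu⟩ c p _ hp h
    refine ⟨sigmaPow τ α u, eq_of_sub_mul_xmon_mem_lowMon hA.linearIndependent
      (hA.xmon_mul_mul_sub_mem_lowMon (hlead u) (hsub hp h)) ?_⟩
    simp [hu]
end

section
/- Let R, I = {1,…,n}, X, σᵢ, δᵢ, c_{ij}, d_{ij}, a_{ij}^{(k)}, p, q, h be as in the reduction machinery, and assume conditions (1)–(3) hold: each σᵢ is a ring endomorphism of R, each δᵢ is a σᵢ-derivation, h(x_j xᵢ r) = h(p(x_j xᵢ) r) for i < j and r ∈ R, and h(x_k x_j xᵢ) = h(p(x_k x_j) xᵢ) for i < j < k. Then for all words a, b ∈ W and all r, s ∈ R: (i) h(a0b) = 0; (ii) h(a(−r)b) = −h(arb); (iii) h(a(r+s)b) = h(arb + asb); (iv) h(a1b) = h(ab); (v) h(a(rs)b) = h(arsb), where on the left-hand sides of (v) the letter is the single R-letter for the product rs, and on the right-hand side r and s appear as two consecutive R-letters. -/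
/-! ## The reduction machinery -/

/-- A letter is either a variable `xᵢ` (`Sum.inl i`) or an element of `R` (`Sum.inr r`). -/
abbrev Ltr (R : Type) (n : ℕ) := Sum (Fin n) R

/-- `W` is the free monoid on the alphabet `X ∪ R`. -/
abbrev W (R : Type) (n : ℕ) := FreeMonoid (Ltr R n)

/-- The free `ℤ`-algebra `ℤ⟨X ∪ R⟩` on the alphabet `X ∪ R`. -/
abbrev FreeAlg (R : Type) (n : ℕ) := MonoidAlgebra ℤ (W R n)

variable {R : Type} [Ring R] {n : ℕ}

/-- The letter `xᵢ` as a word. -/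
def xLtr (i : Fin n) : W R n := FreeMonoid.of (Sum.inl i)

/-- The letter `r ∈ R` as a word. -/
def rLtr (r : R) : W R n := FreeMonoid.of (Sum.inr r)

/-- A word of `W`, viewed inside `ℤ⟨X ∪ R⟩`. -/
noncomputable def wd (w : W R n) : FreeAlg R n := MonoidAlgebra.of ℤ (W R n) w

/-- The number of inversions of a word involving only `x`'s. -/
def invX : List (Ltr R n) → ℕ
  | [] => 0
  | (Sum.inl j) :: rest =>
      (rest.countP (fun l => match l with | Sum.inl i => decide (i < j) | _ => false)) + invX rest
  | (Sum.inr _) :: rest => invX rest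

/-- The number of inversions of a word of the type `(xᵢ, r)`. -/
def invXR : List (Ltr R n) → ℕ
  | [] => 0
  | (Sum.inl _) :: rest =>
      (rest.countP (fun l => match l with | Sum.inr _ => true | _ => false)) + invXR rest
  | (Sum.inr _) :: rest => invXR rest

/-- `T` is the set of words with complexity `(a, 0, 0)`. -/
def MemT (w : W R n) : Prop := invX (FreeMonoid.toList w) = 0 ∧ invXR (FreeMonoid.toList w) = 0

/-- The list of `X`-letters of a word, in order. -/
def xPart (w : W R n) : List (Fin n) :=
  (FreeMonoid.toList w).filterMap (fun l => match l with | Sum.inl i => some i | _ => none)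

/-- The ordered product of the `R`-letters of a word. -/
def rPart (w : W R n) : R :=
  ((FreeMonoid.toList w).filterMap (fun l => match l with | Sum.inr r => some r | _ => none)).prod

/-- `Mon` is the set of standard monomials `x_{i₁} ⋯ x_{i_m}`, `i₁ ≤ ⋯ ≤ i_m`. -/
def Mon (n : ℕ) := {l : List (Fin n) // l.Pairwise (· ≤ ·)}

/-- `F_R(Mon)`, the free left `R`-module with basis `Mon`. -/
abbrev FRMon (R : Type) [Ring R] (n : ℕ) := Mon n →₀ R

open scoped Classical in
/-- The value of `q` on a word: `q(r₁ ⋯ r_m x_{i₁} ⋯ x_{i_k}) = (r₁ ⋯ r_m) • x_{i₁} ⋯ x_{i_k}`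
(for words in `T`; the value on other words is irrelevant). -/
noncomputable def qWord (w : W R n) : FRMon R n :=
  if h : (xPart w).Pairwise (· ≤ ·) then Finsupp.single ⟨xPart w, h⟩ (rPart w) else 0

/-- `t : F_R(Mon) → ℤ⟨X ∪ R⟩`, sending `Σ r_x̄ • x̄` to `Σ (r_x̄ x̄)` (the word consisting of the
`R`-letter `r_x̄` followed by the monomial `x̄`). -/
noncomputable def tmap (f : FRMon R n) : FreeAlg R n :=
  f.sum (fun m r => wd (FreeMonoid.ofList (Sum.inr r :: m.val.map Sum.inl)))

/-- The defining recursion (by induction on complexity) of the reduction map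
`p : W → ℤ⟨X ∪ R⟩` associated with the data `σᵢ, δᵢ, c_{ij}, d_{ij}, a_{ij}^{(k)}`. -/
structure IsReduction (σ δ : Fin n → R → R) (c d : Fin n → Fin n → R)
    (a : Fin n → Fin n → Fin n → R) (P : W R n → FreeAlg R n) : Prop where
  of_memT : ∀ w : W R n, MemT w → P w = wd w
  xr : ∀ (v₁ v₂ : W R n) (i : Fin n) (r : R), MemT (rLtr r * v₂) →
    P (v₁ * xLtr i * rLtr r * v₂) =
      P (v₁ * rLtr (σ i r) * xLtr i * v₂) + P (v₁ * rLtr (δ i r) * v₂)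
  xx : ∀ (v₁ v₂ : W R n) (i j : Fin n), i < j → MemT (xLtr i * v₂) →
    P (v₁ * xLtr j * xLtr i * v₂) =
      P (v₁ * rLtr (c i j) * xLtr i * xLtr j * v₂) +
      (∑ k, P (v₁ * rLtr (a i j k) * xLtr k * v₂)) + P (v₁ * rLtr (d i j) * v₂)

/-- Condition (1): each `σᵢ` is a ring endomorphism of `R` and each `δᵢ` is a
`σᵢ`-derivation. -/
def Cond1 (σ δ : Fin n → R → R) : Prop :=
  ∀ i : Fin n, σ i 1 = 1 ∧ (∀ r s, σ i (r + s) = σ i r + σ i s) ∧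
    (∀ r s, σ i (r * s) = σ i r * σ i s) ∧
    (∀ r s, δ i (r + s) = δ i r + δ i s) ∧
    (∀ r s, δ i (r * s) = σ i r * δ i s + δ i r * s)

/-!
For fixed words `a, b` consider `F(z₁ ⋯ zₘ) = h(a z₁ ⋯ zₘ b)` as a function of a list of scalars
placed in a hole between `a` and `b`. All five identities say that `F` is additive in a single
letter, `F(1) = F()` and `F(rs) = F(r s)`; such functions are closed under sums. We argue by
well-founded induction on the complexity of `a 0 b`, which does not depend on the scalar in the
hole. If `a 0 b ∈ T` then `F(zs) = g(ρₐ · ∏ zs · ρ_b)` with `g` additive, where `ρₐ, ρ_b` are the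
products of the `R`-letters of `a, b`. Otherwise take the rightmost reducible pair `xⱼ y` of the
word. If it does not touch the hole, one reduction step writes `F` as a sum of functions of the
same kind with smaller complexity. If `y` is the hole itself, rule (2) gives
`F(t) = G(σⱼ t) + D(δⱼ t)` with `G, D` of smaller complexity, and since `σⱼ` is a ring
endomorphism and `δⱼ` a `σⱼ`-derivation the identities pass from `G, D` to `F`.
-/

open List

section Letters

variable {α β : Type*}

def xLetters (l : List (α ⊕ β)) : List α := l.filterMap Sum.getLeft?

def rLetters (l : List (α ⊕ β)) : List β := l.filterMap Sum.getRight?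

@[simp] lemma xLetters_nil : xLetters ([] : List (α ⊕ β)) = [] := rfl
@[simp] lemma rLetters_nil : rLetters ([] : List (α ⊕ β)) = [] := rfl

@[simp] lemma xLetters_cons_inl (a : α) (l : List (α ⊕ β)) :
    xLetters (Sum.inl a :: l) = a :: xLetters l := rfl
@[simp] lemma xLetters_cons_inr (b : β) (l : List (α ⊕ β)) :
    xLetters (Sum.inr b :: l) = xLetters l := rfl
@[simp] lemma rLetters_cons_inl (a : α) (l : List (α ⊕ β)) :
    rLetters (Sum.inl a :: l) = rLetters l := rfl
@[simp] lemma rLetters_cons_inr (b : β) (l : List (α ⊕ β)) :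
    rLetters (Sum.inr b :: l) = b :: rLetters l := rfl

@[simp] lemma xLetters_append (l l' : List (α ⊕ β)) :
    xLetters (l ++ l') = xLetters l ++ xLetters l' := filterMap_append
@[simp] lemma rLetters_append (l l' : List (α ⊕ β)) :
    rLetters (l ++ l') = rLetters l ++ rLetters l' := filterMap_append

@[simp] lemma xLetters_map_inr (zs : List β) : xLetters (zs.map (Sum.inr : β → α ⊕ β)) = [] := by
  induction zs <;> simp_all
@[simp] lemma rLetters_map_inr (zs : List β) : rLetters (zs.map (Sum.inr : β → α ⊕ β)) = zs := by
  induction zs <;> simp_all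

end Letters

def inversionCount {α : Type*} [LinearOrder α] : List α → ℕ
  | [] => 0
  | j :: l => l.countP (· < j) + inversionCount l

lemma inversionCount_swap_lt {α : Type*} [LinearOrder α] {i j : α} (hij : i < j) (l l' : List α) :
    inversionCount (l ++ i :: j :: l') < inversionCount (l ++ j :: i :: l') := by
  induction l with
  | nil =>
    simp only [nil_append, inversionCount, countP_cons_of_pos, countP_cons_of_neg, hij,
      hij.not_gt, decide_true, decide_false, Bool.false_eq_true, not_false_eq_true]
    omega
  | cons k l ih =>
    have hperm : (l ++ i :: j :: l').Perm (l ++ j :: i :: l') := (Perm.swap j i l').append_left l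
    simp only [cons_append, inversionCount, hperm.countP_eq]
    omega

section Words

variable {S : Type}

lemma invX_cons_inl (j : Fin n) (l : List (Ltr S n)) :
    invX (Sum.inl j :: l) = (xLetters l).countP (· < j) + invX l := by
  simp only [invX, xLetters, countP_filterMap]
  congr 2
  funext y
  rcases y <;> rfl

lemma invXR_cons_inl (j : Fin n) (l : List (Ltr S n)) :
    invXR (Sum.inl j :: l) = (rLetters l).length + invXR l := by
  simp only [invXR, rLetters, length_filterMap_eq_countP]
  congr 2
  funext y
  rcases y <;> rfl

lemma invX_eq_inversionCount (l : List (Ltr S n)) : invX l = inversionCount (xLetters l) := by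
  induction l with
  | nil => rfl
  | cons y l ih =>
    rcases y with j | r
    · rw [invX_cons_inl, ih]; rfl
    · exact ih

lemma invXR_append_swap_lt (p s : List (Ltr S n)) (j : Fin n) (r t : S) :
    invXR (p ++ Sum.inr t :: Sum.inl j :: s) < invXR (p ++ Sum.inl j :: Sum.inr r :: s) := by
  induction p with
  | nil =>
    change invXR (Sum.inl j :: s) < invXR (Sum.inl j :: Sum.inr r :: s)
    rw [invXR_cons_inl, invXR_cons_inl, rLetters_cons_inr, length_cons]
    exact Nat.add_lt_add_right (Nat.lt_succ_self _) _
  | cons y p ih =>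
    rcases y with k | q
    · simp only [cons_append, invXR_cons_inl, rLetters_append, rLetters_cons_inr,
        rLetters_cons_inl, length_append, length_cons]
      omega
    · exact ih

def complexity (l : List (Ltr S n)) : ℕ ×ₗ ℕ ×ₗ ℕ :=
  toLex ((xLetters l).length, toLex (invX l, invXR l))

lemma complexity_lt_of_length_xLetters_lt (p s : List (Ltr S n)) {m m' : List (Ltr S n)}
    (h : (xLetters m').length < (xLetters m).length) :
    complexity (p ++ m' ++ s) < complexity (p ++ m ++ s) := by
  simp only [complexity, Prod.Lex.toLex_lt_toLex, xLetters_append, length_append]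
  omega

lemma complexity_swap_xr_lt (p s : List (Ltr S n)) (j : Fin n) (r t : S) :
    complexity (p ++ Sum.inr t :: Sum.inl j :: s) <
      complexity (p ++ Sum.inl j :: Sum.inr r :: s) := by
  have hx : xLetters (p ++ Sum.inr t :: Sum.inl j :: s) =
      xLetters (p ++ Sum.inl j :: Sum.inr r :: s) := by simp
  rw [complexity, complexity, invX_eq_inversionCount, invX_eq_inversionCount, hx,
    Prod.Lex.toLex_lt_toLex, Prod.Lex.toLex_lt_toLex]
  exact Or.inr ⟨rfl, Or.inr ⟨rfl, invXR_append_swap_lt p s j r t⟩⟩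

lemma complexity_swap_xx_lt (p s : List (Ltr S n)) {i j : Fin n} (hij : i < j) (t : S) :
    complexity (p ++ Sum.inr t :: Sum.inl i :: Sum.inl j :: s) <
      complexity (p ++ Sum.inl j :: Sum.inl i :: s) := by
  rw [complexity, complexity, invX_eq_inversionCount, invX_eq_inversionCount,
    Prod.Lex.toLex_lt_toLex, Prod.Lex.toLex_lt_toLex]
  refine Or.inr ⟨by simp, Or.inl ?_⟩
  simpa using inversionCount_swap_lt hij (xLetters p) (xLetters s)

end Words

section MemT

variable {S : Type}

lemma memT_ofList_iff (l : List (Ltr S n)) :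
    MemT (FreeMonoid.ofList l) ↔ invX l = 0 ∧ invXR l = 0 := Iff.rfl

lemma memT_cons_inr (r : S) (l : List (Ltr S n)) :
    MemT (FreeMonoid.ofList (Sum.inr r :: l)) ↔ MemT (FreeMonoid.ofList l) := Iff.rfl

lemma memT_cons_inl (j : Fin n) (l : List (Ltr S n)) :
    MemT (FreeMonoid.ofList (Sum.inl j :: l)) ↔
      (rLetters l = [] ∧ ∀ i ∈ xLetters l, j ≤ i) ∧ MemT (FreeMonoid.ofList l) := by
  simp only [memT_ofList_iff, invX_cons_inl, invXR_cons_inl, Nat.add_eq_zero_iff,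
    countP_eq_zero, length_eq_zero_iff, decide_eq_true_eq, not_lt]
  tauto

lemma memT_map_inr_append (zs : List S) (l : List (Ltr S n)) :
    MemT (FreeMonoid.ofList (zs.map Sum.inr ++ l)) ↔ MemT (FreeMonoid.ofList l) := by
  induction zs with
  | nil => rfl
  | cons z zs ih => exact ih

lemma memT_append_map_inr {A B : List (Ltr S n)} {t : S}
    (h : MemT (FreeMonoid.ofList (A ++ Sum.inr t :: B))) (zs : List S) :
    MemT (FreeMonoid.ofList (A ++ zs.map Sum.inr ++ B)) := by
  induction A with
  | nil => exact (memT_map_inr_append zs B).2 h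
  | cons y A ih =>
    rcases y with j | r
    · have hr := ((memT_cons_inl j _).1 h).1.1
      simp at hr
    · exact ih h

def IsRedex (j : Fin n) : Ltr S n → Prop
  | Sum.inl i => i < j
  | Sum.inr _ => True

lemma memT_or_exists_redex (l : List (Ltr S n)) :
    MemT (FreeMonoid.ofList l) ∨ ∃ p j y s, l = p ++ Sum.inl j :: y :: s ∧ IsRedex j y ∧
      MemT (FreeMonoid.ofList (y :: s)) := by
  induction l with
  | nil => exact Or.inl ⟨rfl, rfl⟩
  | cons y l ih =>
    rcases ih with hl | ⟨p, j, y', s, rfl, hred, hs⟩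
    · rcases y with j | r
      · rcases l with _ | ⟨i | r, l⟩
        · exact Or.inl ((memT_cons_inl j []).2 ⟨⟨rfl, by simp⟩, hl⟩)
        · by_cases hij : i < j
          · exact Or.inr ⟨[], j, _, l, rfl, hij, hl⟩
          · refine Or.inl ((memT_cons_inl j _).2 ⟨?_, hl⟩)
            obtain ⟨⟨hr, hle⟩, -⟩ := (memT_cons_inl i l).1 hl
            refine ⟨hr, ?_⟩
            simp only [xLetters_cons_inl, mem_cons, forall_eq_or_imp]
            exact ⟨not_lt.1 hij, fun k hk => (not_lt.1 hij).trans (hle k hk)⟩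
        · exact Or.inr ⟨[], j, _, l, rfl, trivial, hl⟩
      · exact Or.inl hl
    · exact Or.inr ⟨y :: p, j, y', s, rfl, hred, hs⟩

lemma xPart_ofList (l : List (Ltr S n)) : xPart (FreeMonoid.ofList l) = xLetters l := by
  simp only [xPart, xLetters, FreeMonoid.toList_ofList]
  congr 1
  funext y
  rcases y <;> rfl

end MemT

lemma append_inr_eq_append_inl_cons_cases {α β : Type*} {u₁ u₂ p s : List (α ⊕ β)} {t : β}
    {j : α} {y : α ⊕ β} (h : u₁ ++ Sum.inr t :: u₂ = p ++ Sum.inl j :: y :: s) :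
    (∃ w, p = u₁ ++ Sum.inr t :: w ∧ u₂ = w ++ Sum.inl j :: y :: s) ∨
      (u₁ = p ++ [Sum.inl j] ∧ y = Sum.inr t ∧ s = u₂) ∨
      (∃ w, u₁ = p ++ Sum.inl j :: y :: w ∧ s = w ++ Sum.inr t :: u₂) := by
  rcases append_eq_append_iff.1 h with ⟨_ | ⟨z, w⟩, hp, hu⟩ | ⟨_ | ⟨z, _ | ⟨z', w⟩⟩, hu, hs⟩
  · simp at hu
  · simp only [cons_append, cons.injEq] at hu
    exact Or.inl ⟨w, by rw [hp, ← hu.1], hu.2⟩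
  · simp at hs
  · simp only [cons_append, nil_append, cons.injEq] at hs
    exact Or.inr (Or.inl ⟨by rw [hu, hs.1], hs.2.1, hs.2.2⟩)
  · simp only [cons_append, cons.injEq] at hs
    exact Or.inr (Or.inr ⟨w, by rw [hu, hs.1, hs.2.1], hs.2.2⟩)

section Reduction

variable {S : Type} (σ δ : Fin n → S → S) (c d : Fin n → Fin n → S) (a : Fin n → Fin n → Fin n → S)

/-- The right-hand sides of the reduction rules (2) and (3), as replacement words. -/
def reducts (j : Fin n) : Ltr S n → List (List (Ltr S n))
  | Sum.inr r => [[Sum.inr (σ j r), Sum.inl j], [Sum.inr (δ j r)]]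
  | Sum.inl i => [Sum.inr (c i j), Sum.inl i, Sum.inl j] :: [Sum.inr (d i j)] ::
      (finRange n).map fun k => [Sum.inr (a i j k), Sum.inl k]

variable {σ δ c d a}

lemma complexity_lt_of_mem_reducts {j : Fin n} {y : Ltr S n} (hjy : IsRedex j y)
    {m : List (Ltr S n)} (hm : m ∈ reducts σ δ c d a j y) (p s : List (Ltr S n)) :
    complexity (p ++ m ++ s) < complexity (p ++ Sum.inl j :: y :: s) := by
  have drop : ∀ m', (xLetters m').length < (xLetters [Sum.inl j, y]).length →
      complexity (p ++ m' ++ s) < complexity (p ++ Sum.inl j :: y :: s) := fun m' h => by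
    simpa using complexity_lt_of_length_xLetters_lt p s h
  rcases y with i | r
  · simp only [reducts, mem_cons, mem_map, mem_finRange, true_and] at hm
    rcases hm with rfl | rfl | ⟨k, rfl⟩
    · simpa using complexity_swap_xx_lt p s hjy (c i j)
    · exact drop _ (by simp)
    · exact drop _ (by simp)
  · simp only [reducts, mem_cons, not_mem_nil, or_false] at hm
    rcases hm with rfl | rfl
    · simpa using complexity_swap_xr_lt p s j r (σ j r)
    · exact drop _ (by simp)

lemma IsReduction.apply_redex {P : W S n → FreeAlg S n} (hP : IsReduction σ δ c d a P)
    {j : Fin n} {y : Ltr S n} (hjy : IsRedex j y) (p s : List (Ltr S n))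
    (hs : MemT (FreeMonoid.ofList (y :: s))) :
    P (FreeMonoid.ofList (p ++ Sum.inl j :: y :: s)) =
      ((reducts σ δ c d a j y).map fun m => P (FreeMonoid.ofList (p ++ m ++ s))).sum := by
  rcases y with i | r
  · have := hP.xx (FreeMonoid.ofList p) (FreeMonoid.ofList s) i j hjy hs
    simp only [xLtr, rLtr, FreeMonoid.ofList_append, FreeMonoid.ofList_cons, mul_assoc] at this ⊢
    simp only [this, reducts, Fin.sum_univ_def, map_cons, map_map, sum_cons, Function.comp_def,
      FreeMonoid.ofList_cons, FreeMonoid.ofList_nil, mul_one, mul_assoc]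
    abel
  · have := hP.xr (FreeMonoid.ofList p) (FreeMonoid.ofList s) j r hs
    simp only [xLtr, rLtr, FreeMonoid.ofList_append, FreeMonoid.ofList_cons, mul_assoc] at this ⊢
    simp [this, reducts, mul_assoc]

lemma IsReduction.map_apply_redex {P : W S n → FreeAlg S n} (hP : IsReduction σ δ c d a P)
    {M : Type*} [AddCommGroup M] (Q : FreeAlg S n →ₗ[ℤ] M)
    {j : Fin n} {y : Ltr S n} (hjy : IsRedex j y) (p s : List (Ltr S n))
    (hs : MemT (FreeMonoid.ofList (y :: s))) :
    Q (P (FreeMonoid.ofList (p ++ Sum.inl j :: y :: s))) =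
      ((reducts σ δ c d a j y).map fun m => Q (P (FreeMonoid.ofList (p ++ m ++ s)))).sum := by
  rw [hP.apply_redex hjy p s hs, map_list_sum, map_map]
  rfl

end Reduction

section ScalarCompatible

variable {M : Type*} [AddCommGroup M]

/-- `F zs` stands for `h(a z₁ ⋯ zₘ b)`; these are the identities (iii)–(v) for fixed `a, b`. -/
structure IsScalarCompatible (F : List R → M) : Prop where
  map_add : ∀ r s, F [r + s] = F [r] + F [s]
  map_one : F [1] = F []
  map_mul : ∀ r s, F [r * s] = F [r, s]

namespace IsScalarCompatible

variable {F : List R → M}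

lemma map_zero (hF : IsScalarCompatible F) : F [0] = 0 := by
  simpa using hF.map_add 0 0

lemma map_neg (hF : IsScalarCompatible F) (r : R) : F [-r] = -F [r] :=
  eq_neg_of_add_eq_zero_left (by rw [← hF.map_add, neg_add_cancel, hF.map_zero])

lemma of_mul_prod_mul (g : R →+ M) (b c : R) :
    IsScalarCompatible fun zs : List R => g (b * zs.prod * c) where
  map_add r s := by simp [mul_add, add_mul]
  map_one := by simp
  map_mul r s := by simp

lemma of_eq_sum {ι : Type*} (L : List ι) (G : ι → List R → M)
    (hG : ∀ k ∈ L, IsScalarCompatible (G k)) (hF : ∀ zs, F zs = (L.map fun k => G k zs).sum) :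
    IsScalarCompatible F where
  map_add r s := by
    simp only [hF, ← sum_map_add]
    exact congrArg sum (map_congr_left fun k hk => (hG k hk).map_add r s)
  map_one := by
    simp only [hF]
    exact congrArg sum (map_congr_left fun k hk => (hG k hk).map_one)
  map_mul r s := by
    simp only [hF]
    exact congrArg sum (map_congr_left fun k hk => (hG k hk).map_mul r s)

/-- The hole right after `xⱼ`: rule (2) rewrites `xⱼ t` to `σ(t) xⱼ + δ(t)`. -/
lemma of_twisted (σ : R →+* R) (δ : R →+ R) (hδ : ∀ r s, δ (r * s) = σ r * δ s + δ r * s)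
    {G D : List R → M} (hG : IsScalarCompatible G) (hD : IsScalarCompatible D)
    (h₁ : ∀ t, F [t] = G [σ t] + D [δ t]) (h₀ : F [] = G [])
    (h₂ : ∀ r s, F [r, s] = G [σ r, σ s] + D [σ r, δ s] + D [δ r, s]) :
    IsScalarCompatible F where
  map_add r s := by
    rw [h₁, h₁, h₁, _root_.map_add, _root_.map_add, hG.map_add, hD.map_add]
    abel
  map_one := by
    have hδ1 : δ 1 = 0 := by simpa using hδ 1 1
    rw [h₁, _root_.map_one, hδ1, hG.map_one, hD.map_zero, add_zero, h₀]
  map_mul r s := by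
    rw [h₁, h₂, _root_.map_mul, hδ, hG.map_mul, hD.map_add, hD.map_mul, hD.map_mul]
    abel

end IsScalarCompatible

end ScalarCompatible

namespace Cond1

variable {σ δ : Fin n → R → R}

def ringHom (h : Cond1 σ δ) (i : Fin n) : R →+* R :=
  RingHom.mk' ⟨⟨σ i, (h i).1⟩, (h i).2.2.1⟩ (h i).2.1

def derivation (h : Cond1 σ δ) (i : Fin n) : R →+ R := AddMonoidHom.mk' (δ i) (h i).2.2.2.1

@[simp] lemma ringHom_apply (h : Cond1 σ δ) (i : Fin n) (r : R) : h.ringHom i r = σ i r := rfl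

@[simp] lemma derivation_apply (h : Cond1 σ δ) (i : Fin n) (r : R) : h.derivation i r = δ i r := rfl

lemma derivation_mul (h : Cond1 σ δ) (i : Fin n) (r s : R) :
    h.derivation i (r * s) = h.ringHom i r * h.derivation i s + h.derivation i r * s :=
  (h i).2.2.2.2 r s

end Cond1

lemma rPart_ofList (l : List (Ltr R n)) : rPart (FreeMonoid.ofList l) = (rLetters l).prod := by
  simp only [rPart, rLetters, FreeMonoid.toList_ofList]
  congr 2
  funext y
  rcases y <;> rfl

open scoped Classical in
lemma qWord_ofList (l : List (Ltr R n)) :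
    qWord (FreeMonoid.ofList l) = if h : (xLetters l).Pairwise (· ≤ ·)
      then Finsupp.single ⟨xLetters l, h⟩ (rLetters l).prod else 0 := by
  simp only [qWord, xPart_ofList, rPart_ofList]

def fillHole {M : Type*} (Φ : List (Ltr R n) → M) (u₁ u₂ : List (Ltr R n)) (zs : List R) : M :=
  Φ (u₁ ++ zs.map Sum.inr ++ u₂)

section Scalars

variable {σ δ : Fin n → R → R} {c d : Fin n → Fin n → R} {a : Fin n → Fin n → Fin n → R}
  {P : W R n → FreeAlg R n}

lemma isScalarCompatible_fillHole_of_memT (hP : IsReduction σ δ c d a P)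
    {Q : FreeAlg R n →ₗ[ℤ] FRMon R n} (hQ : ∀ w, Q (wd w) = qWord w) {u₁ u₂ : List (Ltr R n)}
    {t : R} (hT : MemT (FreeMonoid.ofList (u₁ ++ Sum.inr t :: u₂))) :
    IsScalarCompatible (fillHole (fun l => Q (P (FreeMonoid.ofList l))) u₁ u₂) := by
  classical
  let xs := xLetters u₁ ++ xLetters u₂
  let g : R →+ FRMon R n := if h : xs.Pairwise (· ≤ ·) then Finsupp.singleAddHom ⟨xs, h⟩ else 0
  convert IsScalarCompatible.of_mul_prod_mul g (rLetters u₁).prod (rLetters u₂).prod using 1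
  funext zs
  rw [fillHole, hP.of_memT _ (memT_append_map_inr hT zs), hQ, qWord_ofList]
  simp only [xLetters_append, xLetters_map_inr, append_nil, rLetters_append, rLetters_map_inr,
    prod_append, mul_assoc]
  by_cases h : xs.Pairwise (· ≤ ·)
  · simp only [g, xs, dif_pos h]
    rfl
  · simp only [g, xs, dif_neg h, AddMonoidHom.zero_apply]

lemma isScalarCompatible_fillHole_append_inl {M : Type*} [AddCommGroup M]
    (hP : IsReduction σ δ c d a P) (h1 : Cond1 σ δ) (Q : FreeAlg R n →ₗ[ℤ] M)
    {p u₂ : List (Ltr R n)} {j : Fin n} (hu₂ : MemT (FreeMonoid.ofList u₂))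
    (hG : IsScalarCompatible (fillHole (fun l => Q (P (FreeMonoid.ofList l))) p (Sum.inl j :: u₂)))
    (hD : IsScalarCompatible (fillHole (fun l => Q (P (FreeMonoid.ofList l))) p u₂)) :
    IsScalarCompatible (fillHole (fun l => Q (P (FreeMonoid.ofList l))) (p ++ [Sum.inl j]) u₂) := by
  have step : ∀ (p s : List (Ltr R n)) (r : R), MemT (FreeMonoid.ofList s) →
      Q (P (FreeMonoid.ofList (p ++ Sum.inl j :: Sum.inr r :: s))) =
        Q (P (FreeMonoid.ofList (p ++ Sum.inr (σ j r) :: Sum.inl j :: s))) +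
          Q (P (FreeMonoid.ofList (p ++ Sum.inr (δ j r) :: s))) := fun p s r hs => by
    simp only [hP.map_apply_redex Q (y := Sum.inr r) trivial p s hs, reducts, map_cons, map_nil,
      sum_cons, sum_nil, add_zero, append_assoc, cons_append, nil_append]
  refine .of_twisted (h1.ringHom j) (h1.derivation j) (h1.derivation_mul j) hG hD
    (fun t => ?_) ?_ (fun r s => ?_)
  · simpa [fillHole] using step p u₂ t hu₂
  · simp only [fillHole, map_nil, append_nil, append_assoc, cons_append, nil_append]
  · have e := step (p ++ [Sum.inr (σ j r)]) u₂ s hu₂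
    simp only [append_assoc, singleton_append] at e
    simp only [fillHole, map_nil, map_cons, append_assoc, cons_append, nil_append,
      Cond1.ringHom_apply, Cond1.derivation_apply]
    rw [step p (Sum.inr s :: u₂) r hu₂, e, add_assoc]

theorem isScalarCompatible_fillHole (hP : IsReduction σ δ c d a P) (h1 : Cond1 σ δ)
    {Q : FreeAlg R n →ₗ[ℤ] FRMon R n} (hQ : ∀ w, Q (wd w) = qWord w) (u₁ u₂ : List (Ltr R n)) :
    IsScalarCompatible (fillHole (fun l => Q (P (FreeMonoid.ofList l))) u₁ u₂) := by
  generalize hN : complexity (u₁ ++ Sum.inr 0 :: u₂) = N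
  induction N using WellFoundedLT.induction generalizing u₁ u₂ with
  | _ N ih =>
  subst hN
  have IH : ∀ v₁ v₂, complexity (v₁ ++ Sum.inr 0 :: v₂) < complexity (u₁ ++ Sum.inr 0 :: u₂) →
      IsScalarCompatible (fillHole (fun l => Q (P (FreeMonoid.ofList l))) v₁ v₂) :=
    fun v₁ v₂ h => ih _ h v₁ v₂ rfl
  rcases memT_or_exists_redex (u₁ ++ Sum.inr 0 :: u₂) with hT | ⟨p, j, y, s, hl, hjy, hs⟩
  · exact isScalarCompatible_fillHole_of_memT hP hQ hT
  -- the redex lies right of the hole, has the hole as its `y`, or lies left of the hole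
  rcases append_inr_eq_append_inl_cons_cases hl with ⟨w, rfl, rfl⟩ | ⟨rfl, rfl, rfl⟩ | ⟨w, rfl, rfl⟩
  · refine .of_eq_sum (reducts σ δ c d a j y) (fun m => fillHole _ u₁ (w ++ m ++ s))
      (fun m hm => IH _ _ ?_) (fun zs => ?_)
    · simpa using complexity_lt_of_mem_reducts hjy hm (u₁ ++ Sum.inr 0 :: w) s
    · simpa only [fillHole, append_assoc] using
        hP.map_apply_redex Q hjy (u₁ ++ (zs.map Sum.inr : List (Ltr R n)) ++ w) s hs
  · refine isScalarCompatible_fillHole_append_inl hP h1 Q ((memT_cons_inr 0 s).1 hs)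
      (IH _ _ ?_) (IH _ _ ?_)
    · simpa using complexity_swap_xr_lt p s j 0 0
    · simpa using complexity_lt_of_length_xLetters_lt p s (m := [Sum.inl j, Sum.inr 0])
        (m' := [Sum.inr 0]) (by simp)
  · refine .of_eq_sum (reducts σ δ c d a j y) (fun m => fillHole _ (p ++ m ++ w) u₂)
      (fun m hm => IH _ _ ?_) (fun zs => ?_)
    · simpa using complexity_lt_of_mem_reducts hjy hm p (w ++ Sum.inr 0 :: u₂)
    · have hs' : MemT (FreeMonoid.ofList (y :: (w ++ zs.map Sum.inr ++ u₂))) :=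
        memT_append_map_inr (A := y :: w) hs zs
      simpa only [fillHole, append_assoc, cons_append] using
        hP.map_apply_redex Q hjy p (w ++ zs.map Sum.inr ++ u₂) hs'

end Scalars

theorem h_scalar_identities_general {R : Type} [Ring R] {n : ℕ}
    (σ δ : Fin n → R → R) (c d : Fin n → Fin n → R) (a : Fin n → Fin n → Fin n → R)
    (P : W R n → FreeAlg R n) (Pbar : FreeAlg R n →ₗ[ℤ] FreeAlg R n)
    (Q : FreeAlg R n →ₗ[ℤ] FRMon R n)
    (hP : IsReduction σ δ c d a P) (hPbar : ∀ w, Pbar (wd w) = P w)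
    (hQ : ∀ w, Q (wd w) = qWord w)
    (h1 : Cond1 σ δ)
    (v₁ v₂ : W R n) (r s : R) :
    Q (Pbar (wd (v₁ * rLtr (0 : R) * v₂))) = 0 ∧
    Q (Pbar (wd (v₁ * rLtr (-r) * v₂))) = - Q (Pbar (wd (v₁ * rLtr r * v₂))) ∧
    Q (Pbar (wd (v₁ * rLtr (r + s) * v₂))) =
      Q (Pbar (wd (v₁ * rLtr r * v₂) + wd (v₁ * rLtr s * v₂))) ∧
    Q (Pbar (wd (v₁ * rLtr (1 : R) * v₂))) = Q (Pbar (wd (v₁ * v₂))) ∧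
    Q (Pbar (wd (v₁ * rLtr (r * s) * v₂))) = Q (Pbar (wd (v₁ * rLtr r * rLtr s * v₂))) := by
  set F := fillHole (fun l => Q (P (FreeMonoid.ofList l))) v₁.toList v₂.toList
  have hF : IsScalarCompatible F := isScalarCompatible_fillHole hP h1 hQ _ _
  have hword : ∀ zs : List R,
      Q (Pbar (wd (v₁ * FreeMonoid.ofList (zs.map Sum.inr) * v₂))) = F zs := fun zs => by
    simp [F, fillHole, hPbar, mul_assoc]
  have h₀ : v₁ * v₂ = v₁ * FreeMonoid.ofList (([] : List R).map Sum.inr) * v₂ := by simp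
  have h₁ : ∀ t : R, v₁ * rLtr t * v₂ = v₁ * FreeMonoid.ofList ([t].map Sum.inr) * v₂ :=
    fun _ => rfl
  have h₂ : v₁ * rLtr r * rLtr s * v₂ = v₁ * FreeMonoid.ofList ([r, s].map Sum.inr) * v₂ := by
    simp [rLtr, mul_assoc]
  simp only [map_add, h₀, h₂, h₁, hword]
  exact ⟨hF.map_zero, hF.map_neg r, hF.map_add r s, hF.map_one, hF.map_mul r s⟩

/-- Under conditions (1)–(3), `h(a0b) = 0`, `h(a(−r)b) = −h(arb)`, `h(a(r+s)b) = h(arb + asb)`,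
`h(a1b) = h(ab)` and `h(a(rs)b) = h(arsb)`, for all words `a, b` and all `r, s ∈ R`.
Here `h = q ∘ p̄` where `p̄, q` are the linear extensions of `p` and of `qWord`. -/
theorem h_scalar_identities {R : Type} [Ring R] {n : ℕ}
    (σ δ : Fin n → R → R) (c d : Fin n → Fin n → R) (a : Fin n → Fin n → Fin n → R)
    (hσ : ∀ (i : Fin n) (r : R), r ≠ 0 → σ i r ≠ 0)
    (hc : ∀ i j : Fin n, i < j → ∃ u : R, u * c i j = 1)
    (P : W R n → FreeAlg R n) (Pbar : FreeAlg R n →ₗ[ℤ] FreeAlg R n)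
    (Q : FreeAlg R n →ₗ[ℤ] FRMon R n)
    (hP : IsReduction σ δ c d a P) (hPbar : ∀ w, Pbar (wd w) = P w)
    (hQ : ∀ w, Q (wd w) = qWord w)
    (h1 : Cond1 σ δ)
    (h2 : ∀ i j : Fin n, i < j → ∀ r : R,
      Q (P (xLtr j * xLtr i * rLtr r)) = Q (Pbar (P (xLtr j * xLtr i) * wd (rLtr r))))
    (h3 : ∀ i j k : Fin n, i < j → j < k →
      Q (P (xLtr k * xLtr j * xLtr i)) = Q (Pbar (P (xLtr k * xLtr j) * wd (xLtr i))))
    (v₁ v₂ : W R n) (r s : R) :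
    Q (Pbar (wd (v₁ * rLtr (0 : R) * v₂))) = 0 ∧
    Q (Pbar (wd (v₁ * rLtr (-r) * v₂))) = - Q (Pbar (wd (v₁ * rLtr r * v₂))) ∧
    Q (Pbar (wd (v₁ * rLtr (r + s) * v₂))) =
      Q (Pbar (wd (v₁ * rLtr r * v₂) + wd (v₁ * rLtr s * v₂))) ∧
    Q (Pbar (wd (v₁ * rLtr (1 : R) * v₂))) = Q (Pbar (wd (v₁ * v₂))) ∧
    Q (Pbar (wd (v₁ * rLtr (r * s) * v₂))) = Q (Pbar (wd (v₁ * rLtr r * rLtr s * v₂))) :=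
  h_scalar_identities_general σ δ c d a P Pbar Q hP hPbar hQ h1 v₁ v₂ r s
end

section
/- Let A be a skew PBW extension of a ring R with respect to x₁,…,xₙ, with parameters σᵢ, δᵢ, c_{ij}, d_{ij}, a_{ij}^{(k)}. Let B be a ring such that: (i) there exists a ring homomorphism φ : R → B; (ii) there exist elements y₁,…,yₙ ∈ B such that B is a free left R-module (scalar action r·b := φ(r)b) with basis the standard monomials y₁^{α₁}⋯yₙ^{αₙ}, α ∈ ℕⁿ; (iii) yᵢ φ(r) = φ(σᵢ(r)) yᵢ + φ(δᵢ(r)) for every r ∈ R, and y_j yᵢ = φ(c_{ij}) yᵢ y_j + φ(a_{ij}^{(1)}) y₁ + ⋯ + φ(a_{ij}^{(n)}) yₙ + φ(d_{ij}) for all i < j. Then B ≅ A as rings, via the homomorphism sending r₁x^{α₁}+⋯+r_t x^{α_t} to φ(r₁)y^{α₁}+⋯+φ(r_t)y^{α_t}. -/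
lemma exists_eq_add_single_of_ne_zero {ι : Type} [LinearOrder ι] [WellFoundedLT ι]
    {α : ι → ℕ} {l₀ : ι} (h : α l₀ ≠ 0) :
    ∃ k ≤ l₀, ∃ β : ι → ℕ, α = β + Pi.single k 1 ∧ ∀ l < k, β l = 0 := by
  obtain ⟨k, hkl₀, hk, hmin⟩ := exists_minimal_le_of_wellFoundedLT (fun l => α l ≠ 0) l₀ h
  refine ⟨k, hkl₀, Function.update α k (α k - 1), ?_, fun l hl => ?_⟩
  · ext l
    by_cases hl : l = k
    · subst hl; simp; omega
    · simp [hl]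
  · rw [Function.update_of_ne hl.ne]
    by_contra hne
    exact hl.not_ge (hmin hne hl.le)

lemma sum_add_single_one {ι : Type} [Fintype ι] [DecidableEq ι] (α : ι → ℕ) (k : ι) :
    ∑ l, (α + Pi.single k 1 : ι → ℕ) l = ∑ l, α l + 1 := by
  simp [Finset.sum_add_distrib]

lemma mul_mul_of_commutation {R ι : Type} [Ring R] [Fintype ι] (X : ι → R) {i k : ι}
    (c d : R) (a : ι → R) (h : X i * X k = c * (X k * X i) + ∑ l, a l * X l + d) (w : R) :
    X i * (X k * w) = c * (X k * (X i * w)) + ∑ l, a l * (X l * w) + d * w := by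
  simp only [← mul_assoc, h, add_mul, Finset.sum_mul]

section Monomials

variable {A : Type} [Ring A]

lemma xmon_succ {n : ℕ} (x : Fin (n + 1) → A) (α : Fin (n + 1) → ℕ) :
    xmon x α = x 0 ^ α 0 * xmon (fun i => x i.succ) (fun i => α i.succ) := by
  simp [xmon, List.finRange_succ, List.map_map, Function.comp_def]

lemma mul_xmon_of_forall_lt {n : ℕ} (x : Fin n → A) {α : Fin n → ℕ} {i : Fin n}
    (h : ∀ l < i, α l = 0) : x i * xmon x α = xmon x (α + Pi.single i 1) := by
  induction n with
  | zero => exact i.elim0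
  | succ n ih =>
    rw [xmon_succ, xmon_succ]
    cases i using Fin.cases with
    | zero =>
      simp [pow_succ', mul_assoc, Fin.succ_ne_zero]
    | succ j =>
      have h0 : α 0 = 0 := h 0 (Fin.succ_pos j)
      have htail := ih (fun l => x l.succ) (α := fun l => α l.succ) (i := j)
        (fun l hl => h l.succ (Fin.succ_lt_succ_iff.2 hl))
      have hsucc : (fun l => (α + Pi.single j.succ 1 : Fin (n + 1) → ℕ) l.succ) =
          (fun l => α l.succ) + Pi.single j 1 := by
        ext l
        simp [Pi.single_apply]
      rw [h0, pow_zero, one_mul, htail, hsucc]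
      simp [h0, (Fin.succ_ne_zero j).symm]

lemma map_xmon_mul {B F : Type} [Ring B] [FunLike F A B] [AddMonoidHomClass F A B] (E : F)
    {n : ℕ} {x : Fin n → A} {y : Fin n → B} (h : ∀ i u, E (x i * u) = y i * E u)
    (α : Fin n → ℕ) (u : A) : E (xmon x α * u) = xmon y α * E u := by
  induction n generalizing u with
  | zero => simp [xmon]
  | succ n ih =>
    have hpow : ∀ k u, E (x 0 ^ k * u) = y 0 ^ k * E u := by
      intro k
      induction k with
      | zero => simp
      | succ k ihk => intro u; rw [pow_succ, mul_assoc, ihk, h, ← mul_assoc, ← pow_succ]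
    rw [xmon_succ, xmon_succ, mul_assoc, hpow, ih (fun i u => h i.succ u), mul_assoc]

end Monomials

section Filtration

variable {A : Type} [Ring A] {n : ℕ}

def xmonFiltration (S : Subring A) (x : Fin n → A) (m : ℕ) : Submodule S A :=
  Submodule.span S (xmon x '' {α | ∑ l, α l ≤ m})

variable {S : Subring A} {x : Fin n → A}

lemma xmon_mem_xmonFiltration {α : Fin n → ℕ} {m : ℕ} (h : ∑ l, α l ≤ m) :
    xmon x α ∈ xmonFiltration S x m :=
  Submodule.subset_span ⟨α, h, rfl⟩

lemma xmonFiltration_mono : Monotone (xmonFiltration S x) :=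
  fun _ _ hm => Submodule.span_mono (Set.image_mono fun _ hα => le_trans hα hm)

lemma exists_mem_xmonFiltration (hspan : Submodule.span S (Set.range (xmon x)) = ⊤) (u : A) :
    ∃ m, u ∈ xmonFiltration S x m := by
  have hu : u ∈ Submodule.span S (Set.range (xmon x)) := hspan ▸ Submodule.mem_top
  induction hu using Submodule.span_induction with
  | mem _ hu =>
    obtain ⟨α, rfl⟩ := hu
    exact ⟨_, xmon_mem_xmonFiltration le_rfl⟩
  | zero => exact ⟨0, Submodule.zero_mem _⟩
  | add u v _ _ hu hv =>
    obtain ⟨m, hm⟩ := hu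
    obtain ⟨m', hm'⟩ := hv
    exact ⟨max m m', add_mem (xmonFiltration_mono (le_max_left m m') hm)
      (xmonFiltration_mono (le_max_right m m') hm')⟩
  | smul s u _ hu =>
    obtain ⟨m, hm⟩ := hu
    exact ⟨m, Submodule.smul_mem _ s hm⟩

end Filtration

section Intertwining

variable {A B F : Type} [Ring A] [Ring B] [FunLike F A B] {n : ℕ}
  {S : Subring A} {x : Fin n → A} {φ : S →+* B} {y : Fin n → B} {E : F}

lemma map_xmon_of_map_mul_xmon (hE : ∀ (r : S) α, E (r * xmon x α) = φ r * xmon y α)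
    (α : Fin n → ℕ) : E (xmon x α) = xmon y α := by
  simpa using hE 1 α

lemma map_mul_left_of_map_mul_xmon [AddMonoidHomClass F A B]
    (hspan : Submodule.span S (Set.range (xmon x)) = ⊤)
    (hE : ∀ (r : S) α, E (r * xmon x α) = φ r * xmon y α) (s : S) (u : A) :
    E (s * u) = φ s * E u := by
  have hu : u ∈ Submodule.span S (Set.range (xmon x)) := hspan ▸ Submodule.mem_top
  induction hu using Submodule.span_induction generalizing s with
  | mem _ hu =>
    obtain ⟨α, rfl⟩ := hu
    rw [hE, map_xmon_of_map_mul_xmon hE]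
  | zero => simp
  | add u v _ _ hu hv => rw [mul_add, map_add, map_add, hu, hv, mul_add]
  | smul t u _ hu =>
    rw [Subring.smul_def, smul_eq_mul, ← mul_assoc, ← S.coe_mul, hu, hu, map_mul, mul_assoc]

lemma map_mul_of_map_xmon_mul [AddMonoidHomClass F A B]
    (hspan : Submodule.span S (Set.range (xmon x)) = ⊤)
    (hE : ∀ (r : S) α, E (r * xmon x α) = φ r * xmon y α)
    (hxmon : ∀ α u, E (xmon x α * u) = xmon y α * E u) (u v : A) :
    E (u * v) = E u * E v := by
  have hsmul := map_mul_left_of_map_mul_xmon hspan hE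
  have hu : u ∈ Submodule.span S (Set.range (xmon x)) := hspan ▸ Submodule.mem_top
  induction hu using Submodule.span_induction with
  | mem _ hu =>
    obtain ⟨α, rfl⟩ := hu
    rw [hxmon, map_xmon_of_map_mul_xmon hE]
  | zero => simp
  | add u w _ _ hu hw => rw [add_mul, map_add, map_add, hu, hw, add_mul]
  | smul s u _ hu => rw [Subring.smul_def, smul_eq_mul, mul_assoc, hsmul, hsmul, hu, mul_assoc]

local notation "𝓕" => xmonFiltration S x

lemma mul_mem_and_map_mul_of_forall_xmon [AddMonoidHomClass F A B] {i : Fin n} {σ δ : S → S}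
    (hσδ : ∀ r : S, x i * r = σ r * x i + δ r)
    (hy1 : ∀ r : S, y i * φ r = φ (σ r) * y i + φ (δ r))
    (hsmul : ∀ (s : S) u, E (s * u) = φ s * E u) {m : ℕ}
    (h : ∀ α, ∑ l, α l ≤ m →
      x i * xmon x α ∈ 𝓕 (m + 1) ∧ E (x i * xmon x α) = y i * E (xmon x α)) :
    ∀ u ∈ 𝓕 m, x i * u ∈ 𝓕 (m + 1) ∧ E (x i * u) = y i * E u := by
  intro u hu
  induction hu using Submodule.span_induction with
  | mem _ hu =>
    obtain ⟨α, hα, rfl⟩ := hu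
    exact h α hα
  | zero => simp
  | add u v _ _ hu hv =>
    rw [mul_add, map_add, map_add, hu.2, hv.2, mul_add]
    exact ⟨add_mem hu.1 hv.1, rfl⟩
  | smul s u hu ih =>
    have hxs : x i * (s * u) = σ s * (x i * u) + δ s * u := by
      rw [← mul_assoc, hσδ, add_mul, mul_assoc]
    rw [Subring.smul_def, smul_eq_mul, hxs]
    refine ⟨add_mem (Submodule.smul_mem _ _ ih.1)
      (Submodule.smul_mem _ _ (xmonFiltration_mono m.le_succ hu)), ?_⟩
    rw [map_add, hsmul, hsmul, hsmul, ih.2, ← mul_assoc, ← mul_assoc, hy1, add_mul]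

lemma mul_mul_mem_and_map_mul [AddMonoidHomClass F A B] {i k : Fin n} {c d : S} {a : Fin n → S}
    (hx : x i * x k = c * (x k * x i) + ∑ l, (a l : A) * x l + d)
    (hy : y i * y k = φ c * (y k * y i) + ∑ l, φ (a l) * y l + φ d)
    (hsmul : ∀ (s : S) u, E (s * u) = φ s * E u) {m : ℕ} {w : A} (hw : w ∈ 𝓕 m)
    (hw_mul : ∀ l, x l * w ∈ 𝓕 (m + 1) ∧ E (x l * w) = y l * E w)
    (hk : ∀ u ∈ 𝓕 (m + 1), x k * u ∈ 𝓕 (m + 2) ∧ E (x k * u) = y k * E u) :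
    x i * (x k * w) ∈ 𝓕 (m + 2) ∧ E (x i * (x k * w)) = y i * (y k * E w) := by
  rw [mul_mul_of_commutation x _ _ _ hx, mul_mul_of_commutation y _ _ _ hy]
  constructor
  · refine add_mem (add_mem ?_ (Submodule.sum_mem _ fun l _ => ?_)) ?_
    · exact Submodule.smul_mem _ c (hk _ (hw_mul i).1).1
    · exact Submodule.smul_mem _ (a l) (xmonFiltration_mono (m + 1).le_succ (hw_mul l).1)
    · exact Submodule.smul_mem _ d (xmonFiltration_mono (by omega) hw)
  · simp only [map_add, map_sum, hsmul, (hk _ (hw_mul i).1).2, (hw_mul _).2]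

/-- The degree bound is part of the claim because the step for `xᵢ x_k x^β` applies the claim
for `x_k` to `xᵢ x^β`, which therefore has to be known to lie in degree `≤ |β| + 1`. -/
theorem mul_mem_and_map_mul_of_mem_xmonFiltration [AddMonoidHomClass F A B]
    (hspan : Submodule.span S (Set.range (xmon x)) = ⊤)
    (hE : ∀ (r : S) α, E (r * xmon x α) = φ r * xmon y α)
    {σ δ : Fin n → S → S} (hσδ : ∀ i (r : S), x i * r = σ i r * x i + δ i r)
    (hy1 : ∀ i (r : S), y i * φ r = φ (σ i r) * y i + φ (δ i r))
    {c d : Fin n → Fin n → S} {a : Fin n → Fin n → Fin n → S}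
    (hcda : ∀ i j : Fin n, i < j →
      x j * x i = (c i j : A) * (x i * x j) + (∑ k, (a i j k : A) * x k) + (d i j : A))
    (hy2 : ∀ i j : Fin n, i < j →
      y j * y i = φ (c i j) * (y i * y j) + (∑ k, φ (a i j k) * y k) + φ (d i j))
    (m : ℕ) (i : Fin n) :
    ∀ u ∈ 𝓕 m, x i * u ∈ 𝓕 (m + 1) ∧ E (x i * u) = y i * E u := by
  have hsmul := map_mul_left_of_map_mul_xmon hspan hE
  induction m using Nat.strong_induction_on generalizing i with | _ m ihm
  induction i using WellFoundedLT.induction with | _ i ihi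
  refine mul_mem_and_map_mul_of_forall_xmon (hσδ i) (hy1 i) hsmul fun α hα => ?_
  by_cases hlow : ∀ l < i, α l = 0
  · rw [mul_xmon_of_forall_lt x hlow, map_xmon_of_map_mul_xmon hE, map_xmon_of_map_mul_xmon hE,
      mul_xmon_of_forall_lt y hlow]
    exact ⟨xmon_mem_xmonFiltration (by rw [sum_add_single_one]; omega), rfl⟩
  push Not at hlow
  obtain ⟨l₀, hl₀i, hl₀⟩ := hlow
  obtain ⟨k, hkl₀, β, rfl, hβ⟩ := exists_eq_add_single_of_ne_zero hl₀
  rw [sum_add_single_one] at hα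
  obtain ⟨m, rfl⟩ : ∃ m', m = m' + 1 := ⟨m - 1, by omega⟩
  have hki : k < i := lt_of_le_of_lt hkl₀ hl₀i
  have hβm : xmon x β ∈ 𝓕 m := xmon_mem_xmonFiltration (by omega)
  have hβ_mul l := ihm m (by omega) l (xmon x β) hβm
  rw [← mul_xmon_of_forall_lt x hβ, (hβ_mul k).2]
  exact mul_mul_mem_and_map_mul (hcda k i hki) (hy2 k i hki) hsmul hβm hβ_mul (ihi k hki)

end Intertwining

lemma exists_addEquiv_map_sum {A B ι : Type} [Ring A] [Ring B] {S : Subring A} {φ : S →+* B}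
    {v : ι → A} {w : ι → B} (hli : LinearIndependent S v)
    (hspan : Submodule.span S (Set.range v) = ⊤)
    (hfree : Function.Bijective (fun f : ι →₀ S => f.sum fun i r => φ r * w i)) :
    ∃ E : A ≃+ B, ∀ f : ι →₀ S,
      E (f.sum fun i r => (r : A) * v i) = f.sum fun i r => φ r * w i := by
  let gA := Finsupp.linearCombination S v
  have hA : Function.Bijective gA :=
    ⟨hli, LinearMap.range_eq_top.1 ((Finsupp.range_linearCombination S).trans hspan)⟩
  let gB : (ι →₀ S) →+ B := AddMonoidHom.mk' (fun f => f.sum fun i r => φ r * w i)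
    fun f g => Finsupp.sum_add_index' (by simp) (by simp [add_mul])
  refine ⟨(AddEquiv.ofBijective gA.toAddMonoidHom hA).symm.trans (AddEquiv.ofBijective gB hfree),
    fun f => ?_⟩
  exact congrArg gB ((AddEquiv.ofBijective gA.toAddMonoidHom hA).symm_apply_apply f)

theorem skewPBW_iso_of_free_basis_general {A : Type} [Ring A] {n : ℕ}
    (S : Subring A) (x : Fin n → A) (hA : IsSkewPBWExt S x)
    -- the parameters of A
    (σ : Fin n → S →+* S)
    (δ : Fin n → S → S)
    (hσδ : ∀ (i : Fin n) (r : S), x i * (r : A) = (σ i r : A) * x i + (δ i r : A))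
    (c d : Fin n → Fin n → S) (a : Fin n → Fin n → Fin n → S)
    (hcda : ∀ i j : Fin n, i < j →
      x j * x i = (c i j : A) * (x i * x j) + (∑ k, (a i j k : A) * x k) + (d i j : A))
    -- (i) a ring homomorphism φ : R → B, (ii) B free with basis the standard monomials in y
    {B : Type} [Ring B] (φ : S →+* B) (y : Fin n → B)
    (hfree : Function.Bijective
      (fun f : (Fin n → ℕ) →₀ S => f.sum (fun α r => φ r * xmon y α)))
    -- (iii) the defining relations
    (hy1 : ∀ (i : Fin n) (r : S), y i * φ r = φ (σ i r) * y i + φ (δ i r))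
    (hy2 : ∀ i j : Fin n, i < j →
      y j * y i = φ (c i j) * (y i * y j) + (∑ k, φ (a i j k) * y k) + φ (d i j)) :
    ∃ e : A ≃+* B, ∀ f : (Fin n → ℕ) →₀ S,
      e (f.sum (fun α r => (r : A) * xmon x α)) = f.sum (fun α r => φ r * xmon y α) := by
  obtain ⟨E, hE⟩ := exists_addEquiv_map_sum hA.linearIndependent hA.spans hfree
  have hE_mul_xmon (r : S) α : E (r * xmon x α) = φ r * xmon y α := by
    simpa using hE (Finsupp.single α r)
  have hE_mul_gen i u : E (x i * u) = y i * E u := by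
    obtain ⟨m, hm⟩ := exists_mem_xmonFiltration hA.spans u
    exact (mul_mem_and_map_mul_of_mem_xmonFiltration hA.spans hE_mul_xmon hσδ hy1 hcda hy2
      m i u hm).2
  have hE_mul := map_mul_of_map_xmon_mul hA.spans hE_mul_xmon (map_xmon_mul E hE_mul_gen)
  exact ⟨AddEquiv.toRingEquiv E hE_mul, hE⟩

/-- If a ring `B` admits a ring homomorphism `φ : R → B` and elements `y₁,…,yₙ` such that `B`
is a free left `R`-module (action via `φ`) with basis the standard monomials in the `yᵢ`, and
the `yᵢ` satisfy relations (i)–(ii) with respect to the parameters of the skew PBW extension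
`A` of `R`, then `B ≅ A` via `r₁ x^{α₁} + ⋯ + r_t x^{α_t} ↦ φ(r₁) y^{α₁} + ⋯ + φ(r_t) y^{α_t}`. -/
theorem skewPBW_iso_of_free_basis {A : Type} [Ring A] {n : ℕ}
    (S : Subring A) (x : Fin n → A) (hA : IsSkewPBWExt S x)
    -- the parameters of A
    (σ : Fin n → S →+* S) (hσinj : ∀ i, Function.Injective (σ i))
    (δ : Fin n → S → S)
    (hδadd : ∀ (i : Fin n) (r s : S), δ i (r + s) = δ i r + δ i s)
    (hδmul : ∀ (i : Fin n) (r s : S), δ i (r * s) = σ i r * δ i s + δ i r * s)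
    (hσδ : ∀ (i : Fin n) (r : S), x i * (r : A) = (σ i r : A) * x i + (δ i r : A))
    (c d : Fin n → Fin n → S) (a : Fin n → Fin n → Fin n → S)
    (hcda : ∀ i j : Fin n, i < j →
      x j * x i = (c i j : A) * (x i * x j) + (∑ k, (a i j k : A) * x k) + (d i j : A))
    -- (i) a ring homomorphism φ : R → B, (ii) B free with basis the standard monomials in y
    {B : Type} [Ring B] (φ : S →+* B) (y : Fin n → B)
    (hfree : Function.Bijective
      (fun f : (Fin n → ℕ) →₀ S => f.sum (fun α r => φ r * xmon y α)))
    -- (iii) the defining relations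
    (hy1 : ∀ (i : Fin n) (r : S), y i * φ r = φ (σ i r) * y i + φ (δ i r))
    (hy2 : ∀ i j : Fin n, i < j →
      y j * y i = φ (c i j) * (y i * y j) + (∑ k, φ (a i j k) * y k) + φ (d i j)) :
    ∃ e : A ≃+* B, ∀ f : (Fin n → ℕ) →₀ S,
      e (f.sum (fun α r => (r : A) * xmon x α)) = f.sum (fun α r => φ r * xmon y α) :=
  skewPBW_iso_of_free_basis_general S x hA σ δ hσδ c d a hcda φ y hfree hy1 hy2
end

section
/- (Poincaré–Birkhoff–Witt theorem.) Let K be a field and 𝒢 a finite-dimensional Lie algebra over K with K-basis y₁,…,yₙ. Then the standard monomials ι(y₁)^{α₁}⋯ι(yₙ)^{αₙ}, with αᵢ ≥ 0 for 1 ≤ i ≤ n, form a K-basis of the universal enveloping algebra 𝒰(𝒢), where ι : 𝒢 → 𝒰(𝒢) is the canonical map. -/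
/-!
Spanning: since `ι(y i) ι(y m) = ι(y m) ι(y i) + ι⁅y i, y m⁆`, induction on the degree and on the
first index shows that `ι(y i)` times a standard monomial of degree `d` is a combination of
standard monomials of degree `≤ d + 1`; as the `ι(y i)` generate the algebra, the standard
monomials span.

Independence (Jacobson): let `P` have basis `x_J`, `J` a multiset of indices, and define
`σ_i = ρ(y i)` on `P` by `σ_i x_J = x_{i J}` when `i ≤ min J`, and otherwise, writing `J = m J'`
with `m = min J`, by `σ_i x_J = σ_m (σ_i x_{J'}) + ρ⁅y i, y m⁆ x_{J'}`. The same induction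
together with the Jacobi identity shows that this is a representation of the Lie algebra; its
extension to the enveloping algebra sends the standard monomial of `J`, applied to `x_∅`, to `x_J`.
-/

theorem Multiset.forall_le_or_exists_cons_lt {α : Type*} [LinearOrder α] (i : α)
    (J : Multiset α) :
    (∀ x ∈ J, i ≤ x) ∨ ∃ m J', J = m ::ₘ J' ∧ m < i ∧ ∀ x ∈ J', m ≤ x := by
  by_cases h : ∀ x ∈ J, i ≤ x
  · exact .inl h
  push Not at h
  obtain ⟨x, hxJ, hxi⟩ := h
  rcases hsort : J.sort with _ | ⟨m, t⟩
  · rw [← J.sort_eq (· ≤ ·), hsort] at hxJ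
    simp at hxJ
  have hJ : J = m ::ₘ ↑t := by rw [← J.sort_eq (· ≤ ·), hsort]; rfl
  have hmt : ∀ x ∈ t, m ≤ x := fun x hx =>
    List.rel_of_pairwise_cons (hsort ▸ J.pairwise_sort (· ≤ ·)) hx
  refine .inr ⟨m, t, hJ, ?_, hmt⟩
  rw [hJ, mem_cons] at hxJ
  rcases hxJ with rfl | hxt
  · exact hxi
  · exact (hmt x hxt).trans_lt hxi

theorem Module.Basis.map_mem_of_forall {ι R M N : Type*} [Semiring R] [AddCommMonoid M]
    [Module R M] [AddCommMonoid N] [Module R N] (b : Module.Basis ι R M) (φ : M →ₗ[R] N)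
    {W : Submodule R N} (h : ∀ i, φ (b i) ∈ W) (v : M) : φ v ∈ W := by
  have : Submodule.span R (Set.range b) ≤ W.comap φ :=
    Submodule.span_le.2 (Set.range_subset_iff.2 h)
  exact this (b.span_eq ▸ Submodule.mem_top)

theorem Submodule.mul_mem_of_mem_span_s13 {R A : Type*} [CommSemiring R] [Semiring A] [Algebra R A]
    {a : A} {s : Set A} {W : Submodule R A} (h : ∀ x ∈ s, a * x ∈ W) {x : A}
    (hx : x ∈ span R s) : a * x ∈ W := by
  have : span R s ≤ W.comap (LinearMap.mulLeft R a) := span_le.2 h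
  exact this hx

theorem Submodule.eq_top_of_one_mem_of_mul_mem {R A : Type*} [CommSemiring R] [Semiring A]
    [Algebra R A] {s : Set A} (hs : Algebra.adjoin R s = ⊤) {W : Submodule R A} (h1 : 1 ∈ W)
    (hmul : ∀ a ∈ s, ∀ x ∈ W, a * x ∈ W) : W = ⊤ := by
  refine eq_top_iff'.2 fun a => ?_
  have ha : a ∈ Algebra.adjoin R s := hs ▸ Algebra.mem_top
  suffices ∀ x ∈ W, a * x ∈ W by simpa using this 1 h1
  induction ha using Algebra.adjoin_induction with
  | mem a ha => exact hmul a ha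
  | algebraMap r => exact fun x hx => by rw [← Algebra.smul_def]; exact W.smul_mem r hx
  | add a b _ _ ha hb => exact fun x hx => by rw [add_mul]; exact W.add_mem (ha x hx) (hb x hx)
  | mul a b _ _ ha hb => exact fun x hx => by rw [mul_assoc]; exact ha _ (hb x hx)

theorem UniversalEnvelopingAlgebra.adjoin_range_ι (R L : Type*) [CommRing R] [LieRing L]
    [LieAlgebra R L] :
    Algebra.adjoin R (Set.range (ι R : L → UniversalEnvelopingAlgebra R L)) = ⊤ := by
  have hsurj : (mkAlgHom R L).range = ⊤ := (AlgHom.range_eq_top _).2 (RingCon.mkₐ_surjective _)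
  rw [← hsurj, ← Algebra.map_top, ← TensorAlgebra.adjoin_range_ι, AlgHom.map_adjoin,
    ← Set.range_comp]
  rfl

namespace PBW

attribute [local instance 100] LieRing.ofAssociativeRing

open Finsupp

variable {K : Type*} [Field K] {L : Type*} [LieRing L] [LieAlgebra K L] {n : ℕ}
  (y : Module.Basis (Fin n) K L)

/-- `act y d i J` is `σ_i x_J` computed with fuel `d`; it does not depend on `d` once
`J.card ≤ d` (`act_eq_act_card`). The fuel makes the nested call `σ_m (σ_i x_{J'})` well founded. -/
noncomputable def act : ℕ → Fin n → Multiset (Fin n) → (Multiset (Fin n) →₀ K)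
  | 0, i, J => single (i ::ₘ J) 1
  | e + 1, i, J =>
    match J.sort with
    | [] => single (i ::ₘ J) 1
    | m :: t =>
      if h : i ≤ m then single (i ::ₘ J) 1
      else
        have : m < i := not_le.mp h
        (act e i t).sum (fun M c => c • act (e + 1) m M) +
          (y.repr ⁅y i, y m⁆).sum fun k c => c • act e k t
  termination_by d i => (d, i.val)

theorem act_zero (i : Fin n) (J : Multiset (Fin n)) : act y 0 i J = single (i ::ₘ J) 1 := by
  rw [act]

theorem act_of_forall_le {d : ℕ} {i : Fin n} {J : Multiset (Fin n)} (h : ∀ x ∈ J, i ≤ x) :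
    act y d i J = single (i ::ₘ J) 1 := by
  obtain _ | e := d
  · rw [act]
  · rw [act]
    split
    · rfl
    · next m t hsort =>
      rw [dif_pos (h m (by rw [← J.mem_sort (· ≤ ·), hsort]; exact List.mem_cons_self))]

theorem act_succ_cons {e : ℕ} {i m : Fin n} {J : Multiset (Fin n)} (hmi : m < i)
    (hm : ∀ x ∈ J, m ≤ x) :
    act y (e + 1) i (m ::ₘ J) =
      (act y e i J).sum (fun M c => c • act y (e + 1) m M) +
        (y.repr ⁅y i, y m⁆).sum fun k c => c • act y e k J := by
  rw [act]
  simp only [Multiset.sort_cons m J (· ≤ ·) hm, dif_neg (not_le.mpr hmi), Multiset.sort_eq]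

theorem act_mem_supported :
    ∀ (d : ℕ) (i : Fin n) (J : Multiset (Fin n)),
      act y d i J ∈ supported K K {M | M.card ≤ J.card + 1}
  | 0, i, J => by
    rw [act_zero]
    exact single_mem_supported K _ (by simp)
  | e + 1, i, J => by
    rcases J.forall_le_or_exists_cons_lt i with h | ⟨m, J', rfl, hmi, hm⟩
    · rw [act_of_forall_le y h]
      exact single_mem_supported K _ (by simp)
    rw [act_succ_cons y hmi hm]
    refine add_mem (Submodule.sum_mem _ fun M hM => Submodule.smul_mem _ _ ?_)
      (Submodule.sum_mem _ fun k _ => Submodule.smul_mem _ _ ?_)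
    · have hM : M.card ≤ J'.card + 1 := (mem_supported _ _).1 (act_mem_supported e i J') hM
      exact supported_mono (fun M' h => by simp at h ⊢; omega) (act_mem_supported (e + 1) m M)
    · exact supported_mono (fun M' h => by simp at h ⊢; omega) (act_mem_supported e k J')
termination_by d i => (d, i.val)

theorem act_succ_of_card_le :
    ∀ (d : ℕ) (i : Fin n) (J : Multiset (Fin n)), J.card ≤ d → act y (d + 1) i J = act y d i J
  | 0, i, J, hJ => by
    rw [Multiset.card_eq_zero.mp (Nat.le_zero.mp hJ), act_of_forall_le y (by simp), act_zero]
  | e + 1, i, J, hJ => by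
    rcases J.forall_le_or_exists_cons_lt i with h | ⟨m, J', rfl, hmi, hm⟩
    · rw [act_of_forall_le y h, act_of_forall_le y h]
    rw [Multiset.card_cons] at hJ
    rw [act_succ_cons y hmi hm, act_succ_cons y hmi hm, act_succ_of_card_le e i J' (by omega)]
    congr 1
    · refine sum_congr fun M hM => ?_
      have hM : M.card ≤ J'.card + 1 := (mem_supported _ _).1 (act_mem_supported y e i J') hM
      rw [act_succ_of_card_le (e + 1) m M (by omega)]
    · exact sum_congr fun k _ => by rw [act_succ_of_card_le e k J' (by omega)]
termination_by d i => (d, i.val)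

theorem act_eq_act_card {d : ℕ} (i : Fin n) {J : Multiset (Fin n)} (hJ : J.card ≤ d) :
    act y d i J = act y J.card i J := by
  induction d, hJ using Nat.le_induction with
  | base => rfl
  | succ d hd ih => rw [act_succ_of_card_le y d i J hd, ih]

noncomputable def rho : L →ₗ[K] Module.End K (Multiset (Fin n) →₀ K) :=
  y.constr K fun i => linearCombination K fun J => act y J.card i J

theorem rho_apply (v : L) (f : Multiset (Fin n) →₀ K) :
    rho y v f = (y.repr v).sum fun k c => c • rho y (y k) f := by
  conv_lhs => rw [← y.linearCombination_repr v, linearCombination_apply, map_finsuppSum]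
  simp only [Finsupp.sum, LinearMap.sum_apply, map_smul, LinearMap.smul_apply]

theorem rho_basis_apply (i : Fin n) (f : Multiset (Fin n) →₀ K) :
    rho y (y i) f = f.sum fun M c => c • act y M.card i M := by
  rw [rho, Module.Basis.constr_basis, linearCombination_apply]

theorem rho_basis_single (i : Fin n) (J : Multiset (Fin n)) :
    rho y (y i) (single J 1) = act y J.card i J := by
  rw [rho_basis_apply, sum_single_index (by simp), one_smul]

theorem rho_basis_single_of_forall_le {i : Fin n} {J : Multiset (Fin n)} (h : ∀ x ∈ J, i ≤ x) :
    rho y (y i) (single J 1) = single (i ::ₘ J) 1 := by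
  rw [rho_basis_single, act_of_forall_le y h]

theorem rho_basis_single_cons {i m : Fin n} {J : Multiset (Fin n)} (hmi : m < i)
    (hm : ∀ x ∈ J, m ≤ x) :
    rho y (y i) (single (m ::ₘ J) 1) =
      rho y (y m) (rho y (y i) (single J 1)) + rho y ⁅y i, y m⁆ (single J 1) := by
  rw [rho_basis_single, Multiset.card_cons, act_succ_cons y hmi hm, rho_basis_single,
    rho_basis_apply, rho_apply]
  congr 1
  · refine sum_congr fun M hM => ?_
    rw [act_eq_act_card y m ((mem_supported _ _).1 (act_mem_supported y _ i J) hM)]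
  · exact sum_congr fun k _ => by rw [rho_basis_single]

theorem rho_basis_single_mem_supported (i : Fin n) (J : Multiset (Fin n)) :
    rho y (y i) (single J 1) ∈ supported K K {M | M.card ≤ J.card + 1} := by
  rw [rho_basis_single]
  exact act_mem_supported y _ i J

noncomputable def defect : L →ₗ[K] L →ₗ[K] Module.End K (Multiset (Fin n) →₀ K) :=
  LinearMap.mk₂ K (fun u v => rho y u * rho y v - rho y v * rho y u - rho y ⁅u, v⁆)
    (fun u u' v => by simp only [map_add, add_lie, add_mul, mul_add]; abel)
    (fun c u v => by
      simp only [map_smul, smul_lie, smul_mul_assoc, mul_smul_comm]; module)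
    (fun u v v' => by simp only [map_add, lie_add, add_mul, mul_add]; abel)
    (fun c u v => by
      simp only [map_smul, lie_smul, smul_mul_assoc, mul_smul_comm]; module)

theorem defect_apply_eq_zero_iff {u v : L} {f : Multiset (Fin n) →₀ K} :
    defect y u v f = 0 ↔ rho y u (rho y v f) = rho y v (rho y u f) + rho y ⁅u, v⁆ f := by
  simp only [defect, LinearMap.mk₂_apply, LinearMap.sub_apply, Module.End.mul_apply,
    sub_sub, sub_eq_zero]

theorem defect_eq_zero_of_forall_support {u v : L} {f : Multiset (Fin n) →₀ K}
    (h : ∀ M ∈ f.support, defect y u v (single M 1) = 0) : defect y u v f = 0 := by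
  rw [← f.sum_single, map_finsuppSum]
  refine Finset.sum_eq_zero fun M hM => ?_
  change defect y u v (single M (f M)) = 0
  rw [← smul_single_one, map_smul, h M hM, smul_zero]

theorem defect_single_eq_zero_of_forall_basis {M : Multiset (Fin n)}
    (h : ∀ k l, defect y (y k) (y l) (single M 1) = 0) (u v : L) :
    defect y u v (single M 1) = 0 := by
  have hB : (defect y).compr₂ (LinearMap.applyₗ (single M 1)) = 0 :=
    LinearMap.ext_basis y y h
  exact LinearMap.congr_fun₂ hB u v

theorem defect_swap (u v : L) : defect y v u = -defect y u v := by
  refine LinearMap.ext fun f => ?_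
  simp only [defect, LinearMap.mk₂_apply, LinearMap.sub_apply, LinearMap.neg_apply,
    Module.End.mul_apply, ← lie_skew u v, map_neg]
  abel

/-- Expanding `x_{m J} = σ_m x_J` by the recursion, the two sides differ by `ρ` of a Jacobi sum. -/
theorem defect_single_cons_eq_zero {i j m : Fin n} {J : Multiset (Fin n)} (hmi : m < i)
    (hmj : m < j) (hm : ∀ x ∈ J, m ≤ x)
    (hJ : ∀ k l, defect y (y k) (y l) (single J 1) = 0)
    (hi : ∀ M : Multiset (Fin n), M.card ≤ J.card + 1 → defect y (y i) (y m) (single M 1) = 0)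
    (hj : ∀ M : Multiset (Fin n), M.card ≤ J.card + 1 → defect y (y j) (y m) (single M 1) = 0) :
    defect y (y i) (y j) (single (m ::ₘ J) 1) = 0 := by
  set x : Multiset (Fin n) →₀ K := single J 1
  have hxJ := defect_single_eq_zero_of_forall_basis y hJ
  have hsupp (k : Fin n) (M : Multiset (Fin n)) (hM : M ∈ (rho y (y k) x).support) :
      M.card ≤ J.card + 1 :=
    (mem_supported _ _).1 (rho_basis_single_mem_supported y k J) hM
  have hcomm_im := (defect_apply_eq_zero_iff y).1
    (defect_eq_zero_of_forall_support y fun M hM => hi M (hsupp j M hM))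
  have hcomm_jm := (defect_apply_eq_zero_iff y).1
    (defect_eq_zero_of_forall_support y fun M hM => hj M (hsupp i M hM))
  have hcomm_i_jm := (defect_apply_eq_zero_iff y).1 (hxJ (y i) ⁅y j, y m⁆)
  have hcomm_j_im := (defect_apply_eq_zero_iff y).1 (hxJ (y j) ⁅y i, y m⁆)
  have hcomm_ij := (defect_apply_eq_zero_iff y).1 (hxJ (y i) (y j))
  have hcomm_m_ij := (defect_apply_eq_zero_iff y).1 (hxJ (y m) ⁅y i, y j⁆)
  have jacobi :
      rho y ⁅y m, ⁅y i, y j⁆⁆ x = rho y ⁅y j, ⁅y i, y m⁆⁆ x - rho y ⁅y i, ⁅y j, y m⁆⁆ x := by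
    have h : ⁅y m, ⁅y i, y j⁆⁆ = ⁅y j, ⁅y i, y m⁆⁆ - ⁅y i, ⁅y j, y m⁆⁆ := by
      rw [← lie_skew (y m), lie_lie, neg_sub]
    rw [h, map_sub, LinearMap.sub_apply]
  rw [defect_apply_eq_zero_iff y, rho_basis_single_cons y hmi hm, rho_basis_single_cons y hmj hm,
    ← rho_basis_single_of_forall_le y hm, map_add, map_add, hcomm_im, hcomm_jm, hcomm_i_jm,
    hcomm_j_im, hcomm_ij, map_add, hcomm_m_ij, jacobi]
  abel

theorem defect_basis_single_eq_zero_of_lt {d : ℕ}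
    (hd : ∀ M : Multiset (Fin n), M.card < d → ∀ k l, defect y (y k) (y l) (single M 1) = 0) :
    ∀ (j : Fin n) (J : Multiset (Fin n)), J.card ≤ d → ∀ i, j < i →
      defect y (y i) (y j) (single J 1) = 0
  | j, J, hJd, i, hji => by
    rcases J.forall_le_or_exists_cons_lt j with h | ⟨m, J', rfl, hmj, hm⟩
    · rw [defect_apply_eq_zero_iff y, rho_basis_single_of_forall_le y h,
        rho_basis_single_cons y hji h]
    rw [Multiset.card_cons] at hJd
    exact defect_single_cons_eq_zero y (hmj.trans hji) hmj hm (hd J' (by omega))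
      (fun M hM => defect_basis_single_eq_zero_of_lt hd m M (by omega) i (hmj.trans hji))
      (fun M hM => defect_basis_single_eq_zero_of_lt hd m M (by omega) j hmj)
termination_by j => j.val

theorem defect_basis_single_eq_zero (J : Multiset (Fin n)) (k l : Fin n) :
    defect y (y k) (y l) (single J 1) = 0 := by
  induction hd : J.card using Nat.strong_induction_on generalizing J k l with
  | _ d ih =>
    have hlt := defect_basis_single_eq_zero_of_lt y (d := d) fun M hM k l => ih _ hM M k l rfl
    rcases lt_trichotomy k l with hkl | rfl | hlk
    · rw [defect_swap, LinearMap.neg_apply, hlt k J hd.le l hkl, neg_zero]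
    · rw [defect_apply_eq_zero_iff y, lie_self, map_zero, LinearMap.zero_apply, add_zero]
    · exact hlt l J hd.le k hlk

theorem defect_eq_zero : defect y = 0 :=
  LinearMap.ext_basis y y fun k l =>
    Finsupp.basisSingleOne.ext fun J => by
      simpa using defect_basis_single_eq_zero y J k l

noncomputable def rhoLie : L →ₗ⁅K⁆ Module.End K (Multiset (Fin n) →₀ K) :=
  { rho y with
    map_lie' := fun {u v} => by
      have h := LinearMap.congr_fun₂ (defect_eq_zero y) u v
      simp only [defect, LinearMap.mk₂_apply, LinearMap.zero_apply] at h
      rw [Ring.lie_def]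
      exact (sub_eq_zero.1 h).symm }

open UniversalEnvelopingAlgebra

noncomputable def stdMonomial (J : Multiset (Fin n)) : UniversalEnvelopingAlgebra K L :=
  ((J.sort (· ≤ ·)).map fun i => ι K (y i)).prod

theorem stdMonomial_zero : stdMonomial y 0 = 1 := by
  simp [stdMonomial]

theorem stdMonomial_cons {i : Fin n} {J : Multiset (Fin n)} (h : ∀ x ∈ J, i ≤ x) :
    stdMonomial y (i ::ₘ J) = ι K (y i) * stdMonomial y J := by
  rw [stdMonomial, Multiset.sort_cons i J (· ≤ ·) h, List.map_cons, List.prod_cons, stdMonomial]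

theorem lift_rhoLie_stdMonomial (J : Multiset (Fin n)) :
    lift K (rhoLie y) (stdMonomial y J) (single 0 1) = single J 1 := by
  have key (l : List (Fin n)) (hl : l.Pairwise (· ≤ ·)) :
      lift K (rhoLie y) ((l.map fun i => ι K (y i)).prod) (single 0 1) =
        single (l : Multiset (Fin n)) 1 := by
    induction l with
    | nil => simp
    | cons i t ih =>
      rw [List.map_cons, List.prod_cons, map_mul, Module.End.mul_apply, ih hl.of_cons,
        lift_ι_apply]
      exact rho_basis_single_of_forall_le y fun x hx => List.rel_of_pairwise_cons hl hx
  rw [stdMonomial, key _ (J.pairwise_sort (· ≤ ·)), Multiset.sort_eq]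

theorem linearIndependent_stdMonomial : LinearIndependent K (stdMonomial y) := by
  let T := LinearMap.applyₗ (R := K) (single 0 1) ∘ₗ (lift K (rhoLie y)).toLinearMap
  refine LinearIndependent.of_comp T ?_
  convert (Finsupp.basisSingleOne (R := K) (ι := Multiset (Fin n))).linearIndependent
  ext1 J
  simpa [T] using lift_rhoLie_stdMonomial y J

noncomputable def stdSpan (d : ℕ) : Submodule K (UniversalEnvelopingAlgebra K L) :=
  Submodule.span K (stdMonomial y '' {J | J.card ≤ d})

theorem stdSpan_mono : Monotone (stdSpan y) := fun _ _ hd =>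
  Submodule.span_mono (Set.image_mono fun _ hJ => le_trans hJ hd)

theorem ι_mul_stdMonomial_mem (i : Fin n) (J : Multiset (Fin n)) :
    ι K (y i) * stdMonomial y J ∈ stdSpan y (J.card + 1) := by
  rcases J.forall_le_or_exists_cons_lt i with h | ⟨m, J', rfl, hmi, hm⟩
  · rw [← stdMonomial_cons y h]
    exact Submodule.subset_span ⟨i ::ₘ J, by simp, rfl⟩
  have hcomm : ι K (y i) * ι K (y m) = ι K (y m) * ι K (y i) + ι K ⁅y i, y m⁆ := by
    rw [LieHom.map_lie, Ring.lie_def]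
    abel
  rw [stdMonomial_cons y hm, ← mul_assoc, hcomm, add_mul, mul_assoc, Multiset.card_cons]
  refine add_mem (Submodule.mul_mem_of_mem_span_s13 ?_ (ι_mul_stdMonomial_mem i J'))
    (y.map_mem_of_forall ((LinearMap.mulRight K (stdMonomial y J')) ∘ₗ (ι K).toLinearMap)
      (fun k => stdSpan_mono y (by omega) (ι_mul_stdMonomial_mem k J')) ⁅y i, y m⁆)
  rintro _ ⟨M, hM, rfl⟩
  exact stdSpan_mono y (by simp at hM; omega) (ι_mul_stdMonomial_mem m M)
termination_by (J.card, i.val)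
decreasing_by
  all_goals subst_vars; simp_wf; rw [Prod.lex_def]
  · simp only [Set.mem_ofPred_eq] at hM
    omega
  all_goals omega

theorem span_range_stdMonomial :
    Submodule.span K (Set.range (stdMonomial y)) = ⊤ := by
  refine Submodule.eq_top_of_one_mem_of_mul_mem (adjoin_range_ι K L)
    (stdMonomial_zero y ▸ Submodule.subset_span ⟨0, rfl⟩) ?_
  rintro _ ⟨v, rfl⟩ x hx
  refine Submodule.mul_mem_of_mem_span_s13 ?_ hx
  rintro _ ⟨J, rfl⟩
  refine y.map_mem_of_forall ((LinearMap.mulRight K (stdMonomial y J)) ∘ₗ (ι K).toLinearMap)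
    (fun k => ?_) v
  exact Submodule.span_mono (Set.image_subset_range _ _) (ι_mul_stdMonomial_mem y k J)

def ofExponents (α : Fin n → ℕ) : Multiset (Fin n) :=
  ((List.finRange n).flatMap fun i => List.replicate (α i) i : List (Fin n))

theorem count_ofExponents (α : Fin n → ℕ) (i : Fin n) : (ofExponents α).count i = α i := by
  rw [ofExponents, Multiset.coe_count, List.count_flatMap, ← Fin.sum_univ_def]
  simp [List.count_replicate]

theorem ofExponents_bijective : Function.Bijective (ofExponents (n := n)) :=
  ⟨fun α β h => funext fun i => by rw [← count_ofExponents α i, h, count_ofExponents],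
    fun J => ⟨fun i => J.count i, Multiset.ext.2 fun i => count_ofExponents _ i⟩⟩

theorem stdMonomial_ofExponents (α : Fin n → ℕ) :
    stdMonomial y (ofExponents α) = ((List.finRange n).map fun i => ι K (y i) ^ α i).prod := by
  have hsorted : ((List.finRange n).flatMap fun i => List.replicate (α i) i).Pairwise (· ≤ ·) := by
    refine List.pairwise_flatMap.2 ⟨fun i _ => List.pairwise_replicate.2 (.inr le_rfl), ?_⟩
    refine (List.pairwise_lt_finRange n).imp fun hij x hx x' hx' => ?_
    rw [List.eq_of_mem_replicate hx, List.eq_of_mem_replicate hx']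
    exact hij.le
  rw [stdMonomial, ofExponents, Multiset.coe_sort, List.mergeSort_eq_self _ hsorted]
  simp [List.flatMap_def, List.map_flatten, List.prod_flatten, Function.comp_def]

end PBW

/-- **The Poincaré–Birkhoff–Witt theorem.**  If `K` is a field and `𝒢` a finite-dimensional Lie
algebra over `K` with `K`-basis `y₁,…,yₙ`, then the standard monomials
`ι(y₁)^{α₁} ⋯ ι(yₙ)^{αₙ}`, `α ∈ ℕⁿ`, form a `K`-basis of the universal enveloping algebra
`𝒰(𝒢)`. -/
theorem poincare_birkhoff_witt (K : Type) [Field K] (L : Type) [LieRing L] [LieAlgebra K L]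
    {n : ℕ} (y : Module.Basis (Fin n) K L) :
    LinearIndependent K
      (fun α : Fin n → ℕ =>
        ((List.finRange n).map
          (fun i => (UniversalEnvelopingAlgebra.ι K (y i) :
              UniversalEnvelopingAlgebra K L) ^ α i)).prod) ∧
    Submodule.span K
      (Set.range (fun α : Fin n → ℕ =>
        ((List.finRange n).map
          (fun i => (UniversalEnvelopingAlgebra.ι K (y i) :
              UniversalEnvelopingAlgebra K L) ^ α i)).prod)) = ⊤ := by
  have hfamily : (fun α : Fin n → ℕ => ((List.finRange n).map fun i =>
      (UniversalEnvelopingAlgebra.ι K (y i) : UniversalEnvelopingAlgebra K L) ^ α i).prod) =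
      PBW.stdMonomial y ∘ PBW.ofExponents :=
    funext fun α => (PBW.stdMonomial_ofExponents y α).symm
  rw [hfamily, PBW.ofExponents_bijective.surjective.range_comp]
  exact ⟨(PBW.linearIndependent_stdMonomial y).comp _ PBW.ofExponents_bijective.injective,
    PBW.span_range_stdMonomial y⟩
end
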